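/- arXiv:2205.15033 — 11 statements merged into one kernel-verified Lean document; each statement's English description precedes it below -/
import Mathlib

section
/- Let L > 0 and let f : E → ℝ be convex with nonempty minimizer set X* and minimum value f*, and suppose f is L-QG+. Let (x_k)_{k≥0} in E and (g_k)_{k≥0} in E satisfy g_k ∈ ∂f(x_k) and x_{k+1} = x_k − (1/L)·g_k for all k ≥ 0. Then for every n ∈ ℕ, ∑_{k=0}^{n} (f(x_k) − f*) ≤ (L/2)·d(x_0, X*)²; in particular (1/(n+1))·∑_{k=0}^{n} (f(x_k) − f*) ≤ (L/(2(n+1)))·d(x_0, X*)². -/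
/-!
Fix `z ∈ X*`. Applying the subgradient inequality at `x_k` to the point `z + g_k / L`, whose
distance to `X*` is at most `‖g_k‖ / L`, and bounding `f (z + g_k / L) - f*` by QG+, gives
`f(x_k) - f* + ‖g_k‖² / (2L) ≤ ⟪g_k, x_k - z⟫`. Expanding the square, this says exactly that the
step `x_{k+1} = x_k - g_k / L` decreases `(L/2)‖x_k - z‖²` by at least `f(x_k) - f*`. Telescoping
bounds the partial sums by `(L/2)‖x_0 - z‖²`, and taking the infimum over `z` gives the claim.
-/

open scoped RealInnerProductSpace

open Finset Metric

theorem sum_range_le_of_add_le {a b : ℕ → ℝ} (hb : ∀ k, 0 ≤ b k) (h : ∀ k, a k + b (k + 1) ≤ b k)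
    (n : ℕ) : ∑ k ∈ range n, a k ≤ b 0 :=
  calc ∑ k ∈ range n, a k ≤ ∑ k ∈ range n, (b k - b (k + 1)) :=
        sum_le_sum fun k _ => by linarith [h k]
    _ = b 0 - b n := sum_range_sub' b n
    _ ≤ b 0 := by linarith [hb n]

theorem le_mul_infDist_sq_of_forall_mem {X : Type*} [PseudoMetricSpace X] {s : Set X} {x : X}
    {a c : ℝ} (hs : s.Nonempty) (ha : 0 < a) (h : ∀ z ∈ s, c ≤ a * dist x z ^ 2) :
    c ≤ a * infDist x s ^ 2 := by
  have hsqrt : √(c / a) ≤ infDist x s :=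
    (le_infDist hs).2 fun z hz =>
      (Real.sqrt_le_sqrt ((div_le_iff₀' ha).2 (h z hz))).trans_eq (Real.sqrt_sq dist_nonneg)
  calc c = a * (c / a) := by field_simp
    _ ≤ a * √(c / a) ^ 2 := by
        gcongr
        rw [Real.sq_sqrt']
        exact le_max_left _ _
    _ ≤ a * infDist x s ^ 2 := by gcongr

theorem sub_le_half_mul_norm_sq_of_mem {E : Type*} [SeminormedAddCommGroup E] {f : E → ℝ}
    {s : Set E} {L c : ℝ} (hL : 0 ≤ L) (hQG : ∀ y, f y - c ≤ L / 2 * infDist y s ^ 2) {z : E}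
    (hz : z ∈ s) (v : E) : f (z + v) - c ≤ L / 2 * ‖v‖ ^ 2 := by
  have hdist : infDist (z + v) s ≤ ‖v‖ := by
    simpa [dist_eq_norm] using infDist_le_dist_of_mem (x := z + v) hz
  calc f (z + v) - c ≤ L / 2 * infDist (z + v) s ^ 2 := hQG _
    _ ≤ L / 2 * ‖v‖ ^ 2 := by gcongr; exact infDist_nonneg

theorem half_mul_norm_sq_subgradient_step_le {E : Type*} [NormedAddCommGroup E]
    [InnerProductSpace ℝ E] {f : E → ℝ} {s : Set E} {L c : ℝ} (hL : 0 < L)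
    (hQG : ∀ y, f y - c ≤ L / 2 * infDist y s ^ 2) {x z g : E} (hz : z ∈ s)
    (hsub : ∀ y, f x + ⟪g, y - x⟫ ≤ f y) :
    L / 2 * ‖x - L⁻¹ • g - z‖ ^ 2 + (f x - c) ≤ L / 2 * ‖x - z‖ ^ 2 := by
  have hlin : f x + (L⁻¹ * ‖g‖ ^ 2 - ⟪g, x - z⟫) ≤ f (z + L⁻¹ • g) := by
    have hdir : z + L⁻¹ • g - x = L⁻¹ • g - (x - z) := by abel
    simpa [hdir, inner_sub_right, real_inner_smul_right, real_inner_self_eq_norm_sq] using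
      hsub (z + L⁻¹ • g)
  have hquad : f (z + L⁻¹ • g) - c ≤ L / 2 * (L⁻¹ * ‖g‖) ^ 2 := by
    simpa [norm_smul, abs_of_pos hL] using sub_le_half_mul_norm_sq_of_mem hL.le hQG hz (L⁻¹ • g)
  have hexpand : ‖x - L⁻¹ • g - z‖ ^ 2
      = ‖x - z‖ ^ 2 - 2 * (L⁻¹ * ⟪g, x - z⟫) + (L⁻¹ * ‖g‖) ^ 2 := by
    rw [sub_right_comm, norm_sub_sq_real, real_inner_smul_right, real_inner_comm, norm_smul,
      Real.norm_eq_abs, abs_of_pos (inv_pos.2 hL)]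
  have hcross : L / 2 * (2 * (L⁻¹ * ⟪g, x - z⟫)) = ⟪g, x - z⟫ := by field_simp
  have hsquare : L / 2 * (L⁻¹ * ‖g‖) ^ 2 = L⁻¹ * ‖g‖ ^ 2 / 2 := by field_simp
  rw [hexpand, mul_add, mul_sub, hcross]
  linarith

theorem subgradient_method_sum_bound_general
    {E : Type*} [NormedAddCommGroup E] [InnerProductSpace ℝ E]
    (L : ℝ) (hL : 0 < L) (f : E → ℝ)
    (Xstar : Set E) (hne : Xstar.Nonempty)
    (fstar : ℝ)
    (hQG : ∀ z, f z - fstar ≤ L / 2 * Metric.infDist z Xstar ^ 2)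
    (x g : ℕ → E)
    (hsub : ∀ k, ∀ y, f y ≥ f (x k) + ⟪g k, y - x k⟫)
    (hupd : ∀ k, x (k + 1) = x k - (1 / L) • g k) :
    ∀ n : ℕ,
      (∑ k ∈ Finset.range (n + 1), (f (x k) - fstar))
          ≤ L / 2 * Metric.infDist (x 0) Xstar ^ 2 ∧
      (1 / ((n : ℝ) + 1)) * ∑ k ∈ Finset.range (n + 1), (f (x k) - fstar)
          ≤ L / (2 * ((n : ℝ) + 1)) * Metric.infDist (x 0) Xstar ^ 2 := by
  intro n
  have hstep : ∀ z ∈ Xstar, ∀ k,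
      (f (x k) - fstar) + L / 2 * ‖x (k + 1) - z‖ ^ 2 ≤ L / 2 * ‖x k - z‖ ^ 2 := by
    intro z hz k
    rw [hupd k, one_div]
    linarith [half_mul_norm_sq_subgradient_step_le hL hQG hz (hsub k)]
  have hsum : ∑ k ∈ range (n + 1), (f (x k) - fstar) ≤ L / 2 * infDist (x 0) Xstar ^ 2 :=
    le_mul_infDist_sq_of_forall_mem hne (half_pos hL) fun z hz => by
      rw [dist_eq_norm]
      exact sum_range_le_of_add_le (b := fun k => L / 2 * ‖x k - z‖ ^ 2) (fun k => by positivity)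
        (hstep z hz) (n + 1)
  refine ⟨hsum, ?_⟩
  calc 1 / ((n : ℝ) + 1) * ∑ k ∈ range (n + 1), (f (x k) - fstar)
      ≤ 1 / ((n : ℝ) + 1) * (L / 2 * infDist (x 0) Xstar ^ 2) := by gcongr
    _ = L / (2 * ((n : ℝ) + 1)) * infDist (x 0) Xstar ^ 2 := by field_simp

theorem subgradient_method_sum_bound
    {E : Type*} [NormedAddCommGroup E] [InnerProductSpace ℝ E] [FiniteDimensional ℝ E]
    (L : ℝ) (hL : 0 < L) (f : E → ℝ) (hconv : ConvexOn ℝ Set.univ f)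
    (Xstar : Set E) (hXstar : Xstar = {z | ∀ y, f z ≤ f y}) (hne : Xstar.Nonempty)
    (fstar : ℝ) (hfstar : ∀ z ∈ Xstar, f z = fstar)
    (hQG : ∀ z, f z - fstar ≤ L / 2 * Metric.infDist z Xstar ^ 2)
    (x g : ℕ → E)
    (hsub : ∀ k, ∀ y, f y ≥ f (x k) + ⟪g k, y - x k⟫)
    (hupd : ∀ k, x (k + 1) = x k - (1 / L) • g k) :
    ∀ n : ℕ,
      (∑ k ∈ Finset.range (n + 1), (f (x k) - fstar))
          ≤ L / 2 * Metric.infDist (x 0) Xstar ^ 2 ∧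
      (1 / ((n : ℝ) + 1)) * ∑ k ∈ Finset.range (n + 1), (f (x k) - fstar)
          ≤ L / (2 * ((n : ℝ) + 1)) * Metric.infDist (x 0) Xstar ^ 2 :=
  subgradient_method_sum_bound_general L hL f Xstar hne fstar hQG x g hsub hupd
end

section
/- Let L > 0 and let f : E → ℝ be convex with nonempty minimizer set X* and minimum value f*, and suppose f is L-QG+. If x ∈ E, g ∈ ∂f(x) and x' = x − (1/L)·g, then f(x) − f* ≤ (L/2)·(d(x, X*)² − d(x', X*)²). -/
open scoped RealInnerProductSpace

theorem subgradient_step_descent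
    {E : Type*} [NormedAddCommGroup E] [InnerProductSpace ℝ E] [FiniteDimensional ℝ E]
    (L : ℝ) (hL : 0 < L) (f : E → ℝ) (hconv : ConvexOn ℝ Set.univ f)
    (Xstar : Set E) (hXstar : Xstar = {z | ∀ y, f z ≤ f y}) (hne : Xstar.Nonempty)
    (fstar : ℝ) (hfstar : ∀ z ∈ Xstar, f z = fstar)
    (hQG : ∀ z, f z - fstar ≤ L / 2 * Metric.infDist z Xstar ^ 2)
    (x g x' : E)
    (hsub : ∀ y, f y ≥ f x + ⟪g, y - x⟫)
    (hx' : x' = x - (1 / L) • g) :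
    f x - fstar ≤ L / 2 * (Metric.infDist x Xstar ^ 2 - Metric.infDist x' Xstar ^ 2) := by
  obtain ⟨p0, hp0⟩ := hne
  set t : ℝ := 1 / L with ht
  have htpos : 0 < t := by positivity
  have hLt : L * t = 1 := by rw [ht]; field_simp
  set G : ℝ := ‖g‖ ^ 2 with hG
  have hG0 : 0 ≤ G := by positivity
  set c : ℝ := f x - fstar with hc
  have hc0 : 0 ≤ c := by
    have h1 : f p0 ≤ f x := by
      rw [hXstar] at hp0; exact hp0 x
    have h2 : f p0 = fstar := hfstar p0 hp0
    linarith
  -- key inequality for each p ∈ Xstar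
  have key : ∀ p ∈ Xstar, Metric.infDist x' Xstar ^ 2 + 2 * t * c ≤ ‖x - p‖ ^ 2 := by
    intro p hp
    -- step 1: ⟪g, x - p⟫ ≥ c + t*G/2, using y = p + t • g
    have hA : c + t * G / 2 ≤ ⟪g, x - p⟫ := by
      set y : E := p + t • g with hy
      have h1 : f y ≥ f x + ⟪g, y - x⟫ := hsub y
      have hinner : ⟪g, y - x⟫ = ⟪g, p - x⟫ + t * G := by
        have : y - x = (p - x) + t • g := by rw [hy]; abel
        rw [this, inner_add_right, real_inner_smul_right, real_inner_self_eq_norm_sq]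
      have hd : Metric.infDist y Xstar ≤ t * ‖g‖ := by
        have h := Metric.infDist_le_dist_of_mem (x := y) hp
        have : dist y p = t * ‖g‖ := by
          rw [dist_eq_norm, hy]
          simp [norm_smul, abs_of_pos htpos]
        linarith [h, this.le]
      have hd0 : 0 ≤ Metric.infDist y Xstar := Metric.infDist_nonneg
      have hd2 : Metric.infDist y Xstar ^ 2 ≤ (t * ‖g‖) ^ 2 := by
        exact pow_le_pow_left₀ hd0 hd 2
      have h2 : f y - fstar ≤ L / 2 * (t * ‖g‖) ^ 2 := by
        have := hQG y
        nlinarith [this, hd2, hL.le]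
      have hcomp : L / 2 * (t * ‖g‖) ^ 2 = t * G / 2 := by
        rw [mul_pow, hG]
        nlinarith [hLt]
      rw [hcomp] at h2
      have hpx : ⟪g, p - x⟫ = -⟪g, x - p⟫ := by
        rw [← inner_neg_right, neg_sub]
      rw [hinner, hpx] at h1
      linarith
    -- step 2: expand ‖x' - p‖²
    have hexp : ‖x' - p‖ ^ 2 = ‖x - p‖ ^ 2 - 2 * t * ⟪g, x - p⟫ + t ^ 2 * G := by
      have hxp : x' - p = (x - p) - t • g := by rw [hx', ht]; abel
      rw [hxp, norm_sub_sq_real, real_inner_smul_right, norm_smul,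
        real_inner_comm]
      rw [Real.norm_eq_abs, abs_of_pos htpos, hG]
      ring
    have hle : Metric.infDist x' Xstar ^ 2 ≤ ‖x' - p‖ ^ 2 := by
      have h := Metric.infDist_le_dist_of_mem (x := x') hp
      rw [dist_eq_norm] at h
      exact pow_le_pow_left₀ Metric.infDist_nonneg h 2
    nlinarith [hA, hexp, hle, htpos]
  -- take the infimum over p
  have harg0 : 0 ≤ Metric.infDist x' Xstar ^ 2 + 2 * t * c := by positivity
  have hsq : Real.sqrt (Metric.infDist x' Xstar ^ 2 + 2 * t * c) ≤ Metric.infDist x Xstar := by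
    by_contra hlt
    push_neg at hlt
    obtain ⟨p, hp, hdp⟩ := (Metric.infDist_lt_iff ⟨p0, hp0⟩).1 hlt
    have h := key p hp
    have : Real.sqrt (Metric.infDist x' Xstar ^ 2 + 2 * t * c) ≤ Real.sqrt (‖x - p‖ ^ 2) :=
      Real.sqrt_le_sqrt h
    rw [Real.sqrt_sq (norm_nonneg _), ← dist_eq_norm] at this
    linarith
  have hfinal : Metric.infDist x' Xstar ^ 2 + 2 * t * c ≤ Metric.infDist x Xstar ^ 2 := by
    have h := pow_le_pow_left₀ (Real.sqrt_nonneg _) hsq 2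
    rwa [Real.sq_sqrt harg0] at h
  have : c ≤ L / 2 * (Metric.infDist x Xstar ^ 2 - Metric.infDist x' Xstar ^ 2) := by
    nlinarith [hfinal, hLt, hL]
  linarith
end

section
/- Let L > 0 and let f : E → ℝ be convex with nonempty minimizer set X* and minimum value f*, and suppose f is L-QG+. Let (x_k)_{k≥0} in E and (g_k)_{k≥0} in E satisfy g_k ∈ ∂f(x_k) and x_{k+1} = x_k − (1/L)·g_k for all k ≥ 0. Then for every n ∈ ℕ, the Polyak–Ruppert average x̄_n = (1/(n+1))·∑_{k=0}^{n} x_k satisfies f(x̄_n) − f* ≤ (L/(2(n+1)))·d(x_0, X*)². -/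
/-!
Plugging the shifted point `z + g/L`, `z ∈ X*`, into the subgradient inequality and bounding its
value by QG+ gives `f x - f* + ‖g‖² / (2L) ≤ ⟪g, x - z⟫`. Expanding the step
`x⁺ = x - g/L` turns this into `f x - f* + (L/2)‖x⁺ - z‖² ≤ (L/2)‖x - z‖²`, hence
`f xₖ - f* ≤ (L/2)(d(xₖ, X*)² - d(xₖ₊₁, X*)²)`. Summing telescopes to
`∑ₖ≤ₙ (f xₖ - f*) ≤ (L/2) d(x₀, X*)²`, and Jensen's inequality transfers this to the average.
-/

open scoped RealInnerProductSpace

open Finset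

lemma Metric.le_mul_infDist_sq {α : Type*} [PseudoMetricSpace α] {s : Set α} {x : α} {a C : ℝ}
    (hs : s.Nonempty) (hC : 0 < C) (h : ∀ z ∈ s, a ≤ C * dist x z ^ 2) :
    a ≤ C * infDist x s ^ 2 := by
  have hsqrt : √(a / C) ≤ infDist x s := by
    refine (le_infDist hs).2 fun z hz => Real.sqrt_le_iff.2 ⟨dist_nonneg, ?_⟩
    rw [div_le_iff₀' hC]
    exact h z hz
  have := (Real.sqrt_le_iff.1 hsqrt).2
  rwa [div_le_iff₀' hC] at this

lemma Finset.sum_range_add_le_of_add_le {a D : ℕ → ℝ} (h : ∀ k, a k + D (k + 1) ≤ D k) (n : ℕ) :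
    ∑ k ∈ range n, a k + D n ≤ D 0 := by
  induction n with
  | zero => simp
  | succ n ih => rw [sum_range_succ]; linarith [h n]

lemma ConvexOn.map_finset_average_le {E ι : Type*} [AddCommGroup E] [Module ℝ E] {s : Set E}
    {f : E → ℝ} (hf : ConvexOn ℝ s f) {t : Finset ι} (ht : t.Nonempty) {p : ι → E}
    (hp : ∀ i ∈ t, p i ∈ s) :
    f ((1 / (#t : ℝ)) • ∑ i ∈ t, p i) ≤ (1 / (#t : ℝ)) * ∑ i ∈ t, f (p i) := by
  have hcard : (0 : ℝ) < #t := by exact_mod_cast ht.card_pos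
  have := hf.map_sum_le (t := t) (w := fun _ => 1 / (#t : ℝ)) (p := p)
    (fun _ _ => by positivity) (by simp [sum_const]; field_simp) hp
  simpa [smul_sum, mul_sum] using this

lemma sub_le_mul_norm_sq_of_mem {E : Type*} [SeminormedAddCommGroup E] {f : E → ℝ} {L fstar : ℝ}
    {s : Set E} {z : E} (hL : 0 ≤ L)
    (hQG : ∀ y, f y - fstar ≤ L / 2 * Metric.infDist y s ^ 2) (hz : z ∈ s) (v : E) :
    f (z + v) - fstar ≤ L / 2 * ‖v‖ ^ 2 := by
  have hdist : Metric.infDist (z + v) s ≤ ‖v‖ := by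
    simpa using Metric.infDist_le_dist_of_mem (x := z + v) hz
  calc f (z + v) - fstar ≤ L / 2 * Metric.infDist (z + v) s ^ 2 := hQG _
    _ ≤ L / 2 * ‖v‖ ^ 2 := by gcongr; exact Metric.infDist_nonneg

section SubgradientStep

variable {E : Type*} [NormedAddCommGroup E] [InnerProductSpace ℝ E]
  {f : E → ℝ} {L fstar : ℝ} {s : Set E}

lemma sub_add_mul_norm_step_sq_le {x g z : E} (hL : 0 < L)
    (hsub : ∀ y, f y ≥ f x + ⟪g, y - x⟫) (hz : ∀ v, f (z + v) - fstar ≤ L / 2 * ‖v‖ ^ 2) :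
    f x - fstar + L / 2 * ‖x - (1 / L) • g - z‖ ^ 2 ≤ L / 2 * ‖x - z‖ ^ 2 := by
  have hnorm : ‖(1 / L) • g‖ = 1 / L * ‖g‖ := by
    rw [norm_smul, Real.norm_eq_abs, abs_of_pos (one_div_pos.2 hL)]
  -- test the subgradient inequality at `z + g / L`, where QG+ bounds `f`
  have hkey : f x - fstar + ‖g‖ ^ 2 / (2 * L) ≤ ⟪g, x - z⟫ := by
    have hval := hz ((1 / L) • g)
    have hsub' := hsub (z + (1 / L) • g)
    rw [show z + (1 / L) • g - x = (1 / L) • g - (x - z) by abel, inner_sub_right,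
      real_inner_smul_right, real_inner_self_eq_norm_sq] at hsub'
    have hval_eq : L / 2 * ‖(1 / L) • g‖ ^ 2 = ‖g‖ ^ 2 / (2 * L) := by
      rw [hnorm]; field_simp
    have hsub_eq : 1 / L * ‖g‖ ^ 2 = 2 * (‖g‖ ^ 2 / (2 * L)) := by field_simp
    linarith
  have hstep : L / 2 * ‖x - (1 / L) • g - z‖ ^ 2
      = L / 2 * ‖x - z‖ ^ 2 - ⟪g, x - z⟫ + ‖g‖ ^ 2 / (2 * L) := by
    rw [show x - (1 / L) • g - z = (x - z) - (1 / L) • g by abel, norm_sub_sq_real,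
      real_inner_smul_right, real_inner_comm, hnorm]
    field_simp
  linarith

lemma sub_add_mul_infDist_step_sq_le {x g : E} (hL : 0 < L) (hs : s.Nonempty)
    (hQG : ∀ y, f y - fstar ≤ L / 2 * Metric.infDist y s ^ 2)
    (hsub : ∀ y, f y ≥ f x + ⟪g, y - x⟫) :
    f x - fstar + L / 2 * Metric.infDist (x - (1 / L) • g) s ^ 2
      ≤ L / 2 * Metric.infDist x s ^ 2 := by
  refine Metric.le_mul_infDist_sq hs (by positivity) fun z hz => ?_
  have hnext : Metric.infDist (x - (1 / L) • g) s ≤ ‖x - (1 / L) • g - z‖ := by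
    simpa [dist_eq_norm] using Metric.infDist_le_dist_of_mem (x := x - (1 / L) • g) hz
  calc f x - fstar + L / 2 * Metric.infDist (x - (1 / L) • g) s ^ 2
      ≤ f x - fstar + L / 2 * ‖x - (1 / L) • g - z‖ ^ 2 := by
        gcongr; exact Metric.infDist_nonneg
    _ ≤ L / 2 * dist x z ^ 2 := by
        rw [dist_eq_norm]
        exact sub_add_mul_norm_step_sq_le hL hsub (sub_le_mul_norm_sq_of_mem hL.le hQG hz)

end SubgradientStep

theorem subgradient_method_polyak_ruppert_average_general
    {E : Type*} [NormedAddCommGroup E] [InnerProductSpace ℝ E]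
    (L : ℝ) (hL : 0 < L) (f : E → ℝ) (hconv : ConvexOn ℝ Set.univ f)
    (Xstar : Set E) (hne : Xstar.Nonempty)
    (fstar : ℝ)
    (hQG : ∀ z, f z - fstar ≤ L / 2 * Metric.infDist z Xstar ^ 2)
    (x g : ℕ → E)
    (hsub : ∀ k, ∀ y, f y ≥ f (x k) + ⟪g k, y - x k⟫)
    (hupd : ∀ k, x (k + 1) = x k - (1 / L) • g k) :
    ∀ n : ℕ,
      f ((1 / ((n : ℝ) + 1)) • ∑ k ∈ Finset.range (n + 1), x k) - fstar
        ≤ L / (2 * ((n : ℝ) + 1)) * Metric.infDist (x 0) Xstar ^ 2 := by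
  intro n
  have hstep : ∀ k, (f (x k) - fstar) + L / 2 * Metric.infDist (x (k + 1)) Xstar ^ 2
      ≤ L / 2 * Metric.infDist (x k) Xstar ^ 2 := fun k => by
    rw [hupd k]; exact sub_add_mul_infDist_step_sq_le hL hne hQG (hsub k)
  have hsum := sum_range_add_le_of_add_le (a := fun k => f (x k) - fstar)
    (D := fun k => L / 2 * Metric.infDist (x k) Xstar ^ 2) hstep (n + 1)
  have hjensen := hconv.map_finset_average_le (nonempty_range_add_one (n := n)) (p := x)
    fun _ _ => Set.mem_univ _
  rw [card_range, Nat.cast_succ] at hjensen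
  have hlast : 0 ≤ L / 2 * Metric.infDist (x (n + 1)) Xstar ^ 2 := by positivity
  calc f ((1 / ((n : ℝ) + 1)) • ∑ k ∈ range (n + 1), x k) - fstar
      ≤ 1 / ((n : ℝ) + 1) * ∑ k ∈ range (n + 1), f (x k) - fstar := by linarith
    _ = 1 / ((n : ℝ) + 1) * ∑ k ∈ range (n + 1), (f (x k) - fstar) := by
      rw [sum_sub_distrib, sum_const, card_range, nsmul_eq_mul, Nat.cast_succ]
      field_simp
    _ ≤ 1 / ((n : ℝ) + 1) * (L / 2 * Metric.infDist (x 0) Xstar ^ 2) := by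
      gcongr; linarith
    _ = L / (2 * ((n : ℝ) + 1)) * Metric.infDist (x 0) Xstar ^ 2 := by
      field_simp

theorem subgradient_method_polyak_ruppert_average
    {E : Type*} [NormedAddCommGroup E] [InnerProductSpace ℝ E] [FiniteDimensional ℝ E]
    (L : ℝ) (hL : 0 < L) (f : E → ℝ) (hconv : ConvexOn ℝ Set.univ f)
    (Xstar : Set E) (hXstar : Xstar = {z | ∀ y, f z ≤ f y}) (hne : Xstar.Nonempty)
    (fstar : ℝ) (hfstar : ∀ z ∈ Xstar, f z = fstar)
    (hQG : ∀ z, f z - fstar ≤ L / 2 * Metric.infDist z Xstar ^ 2)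
    (x g : ℕ → E)
    (hsub : ∀ k, ∀ y, f y ≥ f (x k) + ⟪g k, y - x k⟫)
    (hupd : ∀ k, x (k + 1) = x k - (1 / L) • g k) :
    ∀ n : ℕ,
      f ((1 / ((n : ℝ) + 1)) • ∑ k ∈ Finset.range (n + 1), x k) - fstar
        ≤ L / (2 * ((n : ℝ) + 1)) * Metric.infDist (x 0) Xstar ^ 2 :=
  subgradient_method_polyak_ruppert_average_general L hL f hconv Xstar hne fstar hQG x g hsub hupd
end

section
/- Fix L > 0 and n ∈ ℕ, and let h_L : ℝ → ℝ be the Huber function h_L(x) = (L/2)x² if |x| ≤ 1 and h_L(x) = L|x| − L/2 if |x| > 1. Then h_L is convex, its minimizer set is {0} with minimum value 0, and h_L is L-QG+. Moreover, the points x_k = n + 1 − k for 0 ≤ k ≤ n + 1 satisfy: L is a subgradient of h_L at x_k and x_{k+1} = x_k − (1/L)·L for every 0 ≤ k ≤ n, and ∑_{k=0}^{n} (h_L(x_k) − 0) = (L/2)·(n+1)² = (L/2)·d(x_0, {0})². (Hence the worst-case bound ∑_{k=0}^{n}(f(x_k) − f*) ≤ (L/2)·d(x_0, X*)² for the subgradient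 method with step size 1/L on L-QG+ convex functions is attained with equality.) -/
/-!
Every affine function `y ↦ L c y - L c² / 2` with `|c| ≤ 1` lies below the Huber function, and
at `z` the one with `c = max (-1) (min z 1)` touches it. So `L c` is a subgradient at every
point, which gives convexity, and for `z ≥ 1` the slope is `L`. The iterates `x_k = n + 1 - k`
all stay in the affine region `z ≥ 1`, where `h_L z = L z - L / 2`, so the gradient step moves
by exactly one and the sum of the values is an arithmetic series equal to `L (n + 1)² / 2`.
-/

open Finset

theorem convexOn_univ_of_forall_exists_subgradient {E : Type*} [AddCommGroup E] [Module ℝ E]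
    {f : E → ℝ} (hf : ∀ z, ∃ g : Module.Dual ℝ E, ∀ y, f z + g (y - z) ≤ f y) :
    ConvexOn ℝ Set.univ f := by
  refine ⟨convex_univ, fun a _ b _ s t hs ht hst => ?_⟩
  set z := s • a + t • b
  obtain ⟨g, hg⟩ := hf z
  have hbalance : s * g (a - z) + t * g (b - z) = 0 := by
    simp only [z, map_sub, map_add, map_smul, smul_eq_mul]
    linear_combination -(s * g a + t * g b) * hst
  have hcomb : s * (f z + g (a - z)) + t * (f z + g (b - z)) = f z := by
    linear_combination f z * hst + hbalance
  have := add_le_add (mul_le_mul_of_nonneg_left (hg a) hs) (mul_le_mul_of_nonneg_left (hg b) ht)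
  simp only [smul_eq_mul]
  linarith

noncomputable def huber (L z : ℝ) : ℝ := if |z| ≤ 1 then L / 2 * z ^ 2 else L * |z| - L / 2

section
variable {L : ℝ}

theorem huber_zero (L : ℝ) : huber L 0 = 0 := by simp [huber]

theorem huber_of_one_le {z : ℝ} (hz : 1 ≤ z) : huber L z = L * z - L / 2 := by
  rcases hz.eq_or_lt with rfl | hz
  · simp [huber]; ring
  · rw [huber, if_neg (by rw [abs_of_pos (by linarith)]; linarith), abs_of_pos (by linarith)]

theorem huber_neg (z : ℝ) : huber L (-z) = huber L z := by simp [huber]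

theorem affine_le_huber (hL : 0 ≤ L) {c : ℝ} (hc : |c| ≤ 1) (y : ℝ) :
    L * c * y - L / 2 * c ^ 2 ≤ huber L y := by
  have hcy : c * y ≤ |c| * |y| := by rw [← abs_mul]; exact le_abs_self _
  rw [huber]
  split_ifs with hy
  · nlinarith [mul_nonneg hL (sq_nonneg (y - c))]
  · push Not at hy
    nlinarith [mul_nonneg (mul_nonneg hL (sub_nonneg.2 hc)) (sub_nonneg.2 hy.le),
      mul_nonneg hL (sq_nonneg (1 - |c|)), mul_nonneg hL (sub_nonneg.2 hcy), sq_abs c]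

theorem huber_eq_affine_clamp (z : ℝ) :
    huber L z = L * max (-1) (min z 1) * z - L / 2 * max (-1) (min z 1) ^ 2 := by
  rcases le_total z (-1) with hz | hz
  · rw [← huber_neg, huber_of_one_le (by linarith), min_eq_left (by linarith),
      max_eq_left hz]; ring
  rcases le_total z 1 with hz' | hz'
  · rw [huber, if_pos (abs_le.2 ⟨hz, hz'⟩), min_eq_left hz', max_eq_right hz]; ring
  · rw [huber_of_one_le hz', min_eq_right hz', max_eq_right (by norm_num)]; ring

theorem huber_add_mul_sub_le (hL : 0 ≤ L) (z y : ℝ) :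
    huber L z + L * max (-1) (min z 1) * (y - z) ≤ huber L y := by
  have hc : |max (-1) (min z 1)| ≤ 1 :=
    abs_le.2 ⟨le_max_left _ _, max_le (by norm_num) (min_le_right _ _)⟩
  linarith [affine_le_huber hL hc y, huber_eq_affine_clamp (L := L) z]

theorem huber_add_mul_sub_le_of_one_le (hL : 0 ≤ L) {z : ℝ} (hz : 1 ≤ z) (y : ℝ) :
    huber L z + L * (y - z) ≤ huber L y := by
  simpa [min_eq_right hz] using huber_add_mul_sub_le hL z y

theorem convexOn_huber (hL : 0 ≤ L) : ConvexOn ℝ Set.univ (huber L) :=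
  convexOn_univ_of_forall_exists_subgradient fun z =>
    ⟨(L * max (-1) (min z 1)) • LinearMap.id,
      fun y => by simpa using huber_add_mul_sub_le hL z y⟩

theorem huber_nonneg (hL : 0 ≤ L) (y : ℝ) : 0 ≤ huber L y := by
  simpa using affine_le_huber hL (c := 0) (by simp) y

theorem huber_pos (hL : 0 < L) {z : ℝ} (hz : z ≠ 0) : 0 < huber L z := by
  rw [huber]
  split_ifs with h
  · positivity
  · push Not at h; nlinarith

theorem huber_le_half_mul_sq (hL : 0 ≤ L) (z : ℝ) : huber L z ≤ L / 2 * z ^ 2 := by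
  rw [huber, ← sq_abs z]
  split_ifs
  · rfl
  · nlinarith [mul_nonneg hL (sq_nonneg (|z| - 1))]

theorem setOf_forall_huber_le_eq_singleton (hL : 0 < L) :
    {z | ∀ y, huber L z ≤ huber L y} = {0} := by
  ext z
  refine ⟨fun hz => ?_, fun hz y => ?_⟩
  · by_contra hne
    linarith [hz 0, huber_pos hL hne, huber_zero L]
  · rw [Set.mem_singleton_iff.1 hz, huber_zero]
    exact huber_nonneg hL.le y

end

theorem sum_range_mul_sub_sub_half (L : ℝ) (m : ℕ) :
    ∑ k ∈ range m, (L * ((m : ℝ) - k) - L / 2) = L / 2 * m ^ 2 := by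
  induction m with
  | zero => simp
  | succ m ih =>
    rw [sum_range_succ']
    push_cast
    simp only [add_sub_add_right_eq_sub, ih]
    ring

theorem infDist_singleton_zero_eq_abs (z : ℝ) : Metric.infDist z ({0} : Set ℝ) = |z| := by
  rw [Metric.infDist_singleton, Real.dist_eq, sub_zero]

theorem huber_attains_subgradient_sum_bound
    (L : ℝ) (hL : 0 < L) (n : ℕ)
    (h : ℝ → ℝ)
    (hdef : ∀ z, h z = if |z| ≤ 1 then L / 2 * z ^ 2 else L * |z| - L / 2)
    (x : ℕ → ℝ) (hx : ∀ k, x k = (n : ℝ) + 1 - k) :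
    ConvexOn ℝ Set.univ h ∧
    {z | ∀ y, h z ≤ h y} = {0} ∧
    h 0 = 0 ∧
    (∀ z, h z - 0 ≤ L / 2 * Metric.infDist z ({0} : Set ℝ) ^ 2) ∧
    (∀ k ≤ n, ∀ y, h y ≥ h (x k) + L * (y - x k)) ∧
    (∀ k ≤ n, x (k + 1) = x k - (1 / L) * L) ∧
    (∑ k ∈ Finset.range (n + 1), (h (x k) - 0)) = L / 2 * ((n : ℝ) + 1) ^ 2 ∧
    L / 2 * ((n : ℝ) + 1) ^ 2 = L / 2 * Metric.infDist (x 0) ({0} : Set ℝ) ^ 2 := by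
  obtain rfl : h = huber L := funext hdef
  have one_le_x : ∀ k ≤ n, 1 ≤ x k := fun k hk => by
    have : (k : ℝ) ≤ n := Nat.cast_le.2 hk
    rw [hx]; linarith
  refine ⟨convexOn_huber hL.le, setOf_forall_huber_le_eq_singleton hL, huber_zero L, fun z => ?_,
    fun k hk => huber_add_mul_sub_le_of_one_le hL.le (one_le_x k hk), fun k _ => ?_, ?_, ?_⟩
  · rw [sub_zero, infDist_singleton_zero_eq_abs, sq_abs]
    exact huber_le_half_mul_sq hL.le z
  · rw [hx, hx, one_div_mul_cancel hL.ne']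
    push_cast; ring
  · calc ∑ k ∈ range (n + 1), (huber L (x k) - 0)
        = ∑ k ∈ range (n + 1), (L * (((n + 1 : ℕ) : ℝ) - k) - L / 2) :=
          sum_congr rfl fun k hk => by
            rw [sub_zero, huber_of_one_le (one_le_x k (Nat.lt_succ_iff.1 (mem_range.1 hk))), hx]
            push_cast; ring
      _ = L / 2 * ((n : ℝ) + 1) ^ 2 := by
          rw [sum_range_mul_sub_sub_half]; push_cast; ring
  · rw [infDist_singleton_zero_eq_abs, hx, Nat.cast_zero, sub_zero, abs_of_pos (by positivity)]
end

section
/- Fix L > 0, n ≥ 1 and positive step sizes γ_0, …, γ_{n−1} > 0. Let h_L : ℝ → ℝ be the Huber function h_L(x) = (L/2)x² if |x| ≤ 1 and h_L(x) = L|x| − L/2 if |x| > 1; h_L is convex and L-QG+ with minimizer set {0} and minimum value 0. Set x_0 = 1 + 2·∑_{k=0}^{n−1} L·γ_k and define x_{k+1} = x_k − γ_k·L for 0 ≤ k ≤ n−1. Then x_k ≥ 1 for all 0 ≤ k ≤ n (so L is a subgradient of h_L at each x_k with k < n), and h_L(x_n) − 0 ≥ (L/2)·d(x_0, {0})² / (1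 + 2·∑_{k=0}^{n−1} L·γ_k). -/
/-!
The Huber function `huber L` is the supremum of the affine minorants `y ↦ L * (c * y - c ^ 2 / 2)`,
`|c| ≤ 1`, and at each point `v` the one with `c` the clamp of `v` to `[-1, 1]` touches it; this
gives convexity, and the subgradient `L` at every point `≥ 1`. With `S = ∑ L γ_k`, the iterates
decrease from `1 + 2S` by `S` in total, so they stay in `[1 + S, 1 + 2S]`, where `huber L` is
`z ↦ L z - L / 2`; hence `huber L (x n) = L / 2 * (1 + 2S) = L / 2 * x 0 ^ 2 / (1 + 2S)`.
-/

open Finset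

theorem convexOn_of_forall_exists_linear_le {E : Type*} [AddCommGroup E] [Module ℝ E]
    {s : Set E} {f : E → ℝ} (hs : Convex ℝ s)
    (hf : ∀ v ∈ s, ∃ g : E →ₗ[ℝ] ℝ, ∀ y ∈ s, f v + g (y - v) ≤ f y) : ConvexOn ℝ s f := by
  refine ⟨hs, fun p hp q hq a b ha hb hab => ?_⟩
  set v := a • p + b • q
  obtain ⟨g, hg⟩ := hf v (hs hp hq ha hb hab)
  have hcancel : a * g (p - v) + b * g (q - v) = 0 := by
    rw [← smul_eq_mul, ← smul_eq_mul, ← g.map_smul, ← g.map_smul, ← g.map_add]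
    convert g.map_zero using 2
    rw [smul_sub, smul_sub, sub_add_sub_comm, ← add_smul, hab, one_smul, sub_self]
  have hsplit : f v = a * f v + b * f v := by rw [← add_mul, hab, one_mul]
  simp only [smul_eq_mul]
  linarith [mul_le_mul_of_nonneg_left (hg p hp) ha, mul_le_mul_of_nonneg_left (hg q hq) hb]

theorem eq_sub_sum_range_of_forall_succ_eq_sub {G : Type*} [AddCommGroup G] {n : ℕ}
    {x d : ℕ → G} (hx : ∀ k < n, x (k + 1) = x k - d k) :
    ∀ k ≤ n, x k = x 0 - ∑ j ∈ range k, d j := by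
  intro k hk
  have hd : ∑ j ∈ range k, d j = ∑ j ∈ range k, (x j - x (j + 1)) :=
    sum_congr rfl fun j hj => by rw [hx j ((mem_range.mp hj).trans_le hk)]; abel
  rw [hd, sum_range_sub', sub_sub_cancel]

namespace huber

variable {L : ℝ}

@[simp]
theorem apply_zero (L : ℝ) : huber L 0 = 0 := by simp [huber]

theorem apply_of_one_le {z : ℝ} (hz : 1 ≤ z) : huber L z = L * z - L / 2 := by
  unfold huber
  split_ifs with h
  · rw [abs_le] at h
    rw [le_antisymm h.2 hz]
    ring
  · rw [abs_of_nonneg (by linarith)]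

theorem le_mul_sq (hL : 0 ≤ L) (z : ℝ) : huber L z ≤ L / 2 * z ^ 2 := by
  unfold huber
  split_ifs
  · rfl
  · nlinarith [mul_nonneg hL (sq_nonneg (|z| - 1)), sq_abs z]

theorem mul_abs_sub_le (hL : 0 ≤ L) (z : ℝ) : L * |z| - L / 2 ≤ huber L z := by
  unfold huber
  split_ifs
  · nlinarith [mul_nonneg hL (sq_nonneg (|z| - 1)), sq_abs z]
  · rfl

theorem mul_affine_le (hL : 0 ≤ L) {c : ℝ} (hc : |c| ≤ 1) (y : ℝ) :
    L * (c * y - c ^ 2 / 2) ≤ huber L y := by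
  unfold huber
  split_ifs with hy
  · nlinarith [mul_nonneg hL (sq_nonneg (y - c))]
  · -- `c y ≤ |c| |y|` and `(1 - c²) / 2 ≤ 1 - |c| ≤ (1 - |c|) |y|`
    have hcy : c * y ≤ |c| * |y| := by rw [← abs_mul]; exact le_abs_self _
    have hslack : 0 ≤ (1 - |c|) * (2 * |y| - 1 - |c|) :=
      mul_nonneg (by linarith) (by linarith)
    nlinarith [mul_le_mul_of_nonneg_left hcy hL, mul_nonneg hL hslack, sq_abs c]

theorem exists_mul_affine_eq (v : ℝ) : ∃ c, |c| ≤ 1 ∧ huber L v = L * (c * v - c ^ 2 / 2) := by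
  unfold huber
  split_ifs with hv
  · exact ⟨v, hv, by ring⟩
  · rcases le_or_gt 0 v with h0 | h0
    · exact ⟨1, by norm_num, by rw [abs_of_nonneg h0]; ring⟩
    · exact ⟨-1, by norm_num, by rw [abs_of_neg h0]; ring⟩

theorem convexOn (hL : 0 ≤ L) : ConvexOn ℝ Set.univ (huber L) := by
  refine convexOn_of_forall_exists_linear_le convex_univ fun v _ => ?_
  obtain ⟨c, hc, hv⟩ := exists_mul_affine_eq (L := L) v
  refine ⟨LinearMap.mulLeft ℝ (L * c), fun y _ => ?_⟩
  rw [LinearMap.mulLeft_apply, hv]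
  linarith [mul_affine_le hL hc y]

theorem pos (hL : 0 < L) {z : ℝ} (hz : z ≠ 0) : 0 < huber L z := by
  unfold huber
  split_ifs with h
  · positivity
  · nlinarith

theorem setOf_forall_le_eq_zero (hL : 0 < L) : {z | ∀ y, huber L z ≤ huber L y} = {0} := by
  have hnonneg : ∀ y, 0 ≤ huber L y := fun y => by
    simpa using mul_affine_le hL.le (c := 0) (by simp) y
  ext z
  refine ⟨fun hz => ?_, fun hz y => by rw [Set.mem_singleton_iff.mp hz, apply_zero]; exact hnonneg y⟩
  by_contra hz0
  have := hz 0
  rw [apply_zero] at this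
  exact this.not_gt (pos hL hz0)

end huber

theorem huber_lower_bound_varying_steps_general
    (L : ℝ) (hL : 0 < L) (n : ℕ)
    (γ : ℕ → ℝ) (hγ : ∀ k < n, 0 < γ k)
    (h : ℝ → ℝ)
    (hdef : ∀ z, h z = if |z| ≤ 1 then L / 2 * z ^ 2 else L * |z| - L / 2)
    (x : ℕ → ℝ) (hx0 : x 0 = 1 + 2 * ∑ k ∈ Finset.range n, L * γ k)
    (hupd : ∀ k < n, x (k + 1) = x k - γ k * L) :
    ConvexOn ℝ Set.univ h ∧
    {z | ∀ y, h z ≤ h y} = {0} ∧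
    h 0 = 0 ∧
    (∀ z, h z - 0 ≤ L / 2 * Metric.infDist z ({0} : Set ℝ) ^ 2) ∧
    (∀ k ≤ n, 1 ≤ x k) ∧
    (∀ k < n, ∀ y, h y ≥ h (x k) + L * (y - x k)) ∧
    h (x n) - 0 ≥ L / 2 * Metric.infDist (x 0) ({0} : Set ℝ) ^ 2
        / (1 + 2 * ∑ k ∈ Finset.range n, L * γ k) := by
  obtain rfl : h = huber L := funext hdef
  set S := ∑ k ∈ range n, L * γ k
  have hterm : ∀ k ∈ range n, 0 ≤ L * γ k := fun k hk => (mul_pos hL (hγ k (mem_range.mp hk))).le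
  have hS : 0 ≤ S := sum_nonneg hterm
  have hx : ∀ k ≤ n, x k = x 0 - ∑ j ∈ range k, L * γ j := by
    simpa only [mul_comm (γ _)] using eq_sub_sum_range_of_forall_succ_eq_sub hupd
  have hge : ∀ k ≤ n, 1 + S ≤ x k := fun k hk => by
    have := sum_le_sum_of_subset_of_nonneg (range_subset_range.mpr hk) fun j hj _ => hterm j hj
    rw [hx k hk, hx0]
    linarith
  have hxn : x n = 1 + S := by rw [hx n le_rfl, hx0]; ring
  have hdist : Metric.infDist (x 0) ({0} : Set ℝ) = 1 + 2 * S := by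
    rw [Metric.infDist_singleton, Real.dist_eq, sub_zero, hx0, abs_of_nonneg (by linarith)]
  refine ⟨huber.convexOn hL.le, huber.setOf_forall_le_eq_zero hL, huber.apply_zero L, fun z => ?_,
    fun k hk => by linarith [hge k hk], fun k hk y => ?_, ?_⟩
  · rw [Metric.infDist_singleton, Real.dist_eq, sub_zero, sq_abs, sub_zero]
    exact huber.le_mul_sq hL.le z
  · rw [huber.apply_of_one_le (z := x k) (by linarith [hge k hk.le])]
    linarith [huber.mul_affine_le hL.le (c := 1) (by simp) y]
  · rw [hdist, sq, ← mul_assoc, mul_div_assoc, div_self (by linarith), mul_one, sub_zero]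
    have := huber.mul_abs_sub_le hL.le (x n)
    rw [hxn, abs_of_nonneg (by linarith)] at this
    rw [hxn]
    linarith

theorem huber_lower_bound_varying_steps
    (L : ℝ) (hL : 0 < L) (n : ℕ) (hn : 1 ≤ n)
    (γ : ℕ → ℝ) (hγ : ∀ k < n, 0 < γ k)
    (h : ℝ → ℝ)
    (hdef : ∀ z, h z = if |z| ≤ 1 then L / 2 * z ^ 2 else L * |z| - L / 2)
    (x : ℕ → ℝ) (hx0 : x 0 = 1 + 2 * ∑ k ∈ Finset.range n, L * γ k)
    (hupd : ∀ k < n, x (k + 1) = x k - γ k * L) :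
    ConvexOn ℝ Set.univ h ∧
    {z | ∀ y, h z ≤ h y} = {0} ∧
    h 0 = 0 ∧
    (∀ z, h z - 0 ≤ L / 2 * Metric.infDist z ({0} : Set ℝ) ^ 2) ∧
    (∀ k ≤ n, 1 ≤ x k) ∧
    (∀ k < n, ∀ y, h y ≥ h (x k) + L * (y - x k)) ∧
    h (x n) - 0 ≥ L / 2 * Metric.infDist (x 0) ({0} : Set ℝ) ^ 2
        / (1 + 2 * ∑ k ∈ Finset.range n, L * γ k) :=
  huber_lower_bound_varying_steps_general L hL n γ hγ h hdef x hx0 hupd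
end

section
/- Fix L > 0, n ≥ 1 and ε ∈ (0, 1). Define f : ℝ^{n+1} → ℝ by f(x) = (L/2)·(max_{0 ≤ i ≤ n} |x_i|)²; f is convex, L-QG+, with minimizer set {0} and minimum value 0. Let x_0 ∈ ℝ^{n+1} have coordinates (x_0)_i = 1 − i·ε/n for i = 0, …, n. Then for every sequence of points x_1, …, x_n ∈ ℝ^{n+1} and every choice of vectors g_0, …, g_{n−1} with g_i ∈ ∂f(x_i) for all i < n and x_k − x_0 ∈ span{g_0, g_1, …, g_{k−1}} for every 1 ≤ k ≤ n, one has f(x_n) − 0 ≥ (L/2)·(1 − ε)² ≥ (1 − ε)²·(L/(2(n+1)))·d(x_0, {0})². (Hence no first-order method whose iterates stay in the span of observed subgradients can beat the rate (L/2)·d(x_0, X*)²/(n+1) on convex L-QG+ functions.) -/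
open scoped RealInnerProductSpace

/-!
The function is `L/2` times the square of the sup norm. On a coordinate `j` where `|z j|` is not
maximal, nudging `z j` leaves the sup norm unchanged, so every subgradient at `z` vanishes at `j`.
The coordinates of `x0` strictly decrease in absolute value, so by induction `x k` agrees with
`x0` on the coordinates `≥ k`: each `g i` with `i < k` is supported on the coordinates `≤ i`.
In particular the last coordinate of `x n` is still `1 - ε`, while `‖x0‖² ≤ n + 1`.
-/

namespace EuclideanSpace

variable {ι : Type*} [Fintype ι]

theorem iSup_abs_eq_norm_ofLp [Nonempty ι] (z : EuclideanSpace ℝ ι) :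
    ⨆ i, |z i| = ‖WithLp.ofLp z‖ :=
  (IsGreatest.pi_norm (WithLp.ofLp z)).isLUB.ciSup_eq

theorem norm_ofLp_le (z : EuclideanSpace ℝ ι) : ‖WithLp.ofLp z‖ ≤ ‖z‖ :=
  (pi_norm_le_iff_of_nonneg (norm_nonneg z)).2 (PiLp.norm_apply_le z)

theorem convexOn_sq_norm_ofLp :
    ConvexOn ℝ Set.univ fun z : EuclideanSpace ℝ ι => ‖WithLp.ofLp z‖ ^ 2 :=
  ((convexOn_norm convex_univ).pow (fun _ _ => norm_nonneg _) 2).comp_linearMap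
    (WithLp.linearEquiv 2 ℝ (ι → ℝ)).toLinearMap

theorem norm_ofLp_add_single [DecidableEq ι] {z : EuclideanSpace ℝ ι} {j : ι} {t : ℝ}
    (hj : |z j| < ‖WithLp.ofLp z‖) (ht : |t| ≤ ‖WithLp.ofLp z‖ - |z j|) :
    ‖WithLp.ofLp (z + single j t)‖ = ‖WithLp.ofLp z‖ := by
  set z' := z + single j t
  have hz' : ∀ i, i ≠ j → z' i = z i := fun i hi => by simp [z', hi]
  apply le_antisymm
  · refine (pi_norm_le_iff_of_nonneg (norm_nonneg _)).2 fun i => ?_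
    by_cases hi : i = j
    · subst hi
      calc ‖z' i‖ = |z i + t| := by simp [z']
        _ ≤ |z i| + |t| := abs_add_le _ _
        _ ≤ ‖WithLp.ofLp z‖ := by linarith
    · simpa [hz' i hi] using norm_le_pi_norm (WithLp.ofLp z) i
  · have hmax : ‖WithLp.ofLp z‖ ≤ max |z j| ‖WithLp.ofLp z'‖ := by
      refine (pi_norm_le_iff_of_nonneg (le_max_of_le_left (abs_nonneg _))).2 fun i => ?_
      by_cases hi : i = j
      · subst hi; exact le_max_left _ _
      · rw [← hz' i hi]; exact le_max_of_le_right (norm_le_pi_norm (WithLp.ofLp z') i)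
    exact (le_max_iff.1 hmax).resolve_left hj.not_ge

theorem norm_sq_le_card {z : EuclideanSpace ℝ ι} (hz : ∀ i, |z i| ≤ 1) :
    ‖z‖ ^ 2 ≤ Fintype.card ι := by
  calc ‖z‖ ^ 2 = ∑ i, |z i| ^ 2 := norm_sq_eq z
    _ ≤ ∑ _i : ι, (1 : ℝ) := Finset.sum_le_sum fun i _ => pow_le_one₀ (abs_nonneg _) (hz i)
    _ = Fintype.card ι := by simp

theorem subgradient_apply_eq_zero_of_abs_lt [DecidableEq ι] {φ : ℝ → ℝ}
    {f : EuclideanSpace ℝ ι → ℝ} (hf : ∀ z, f z = φ ‖WithLp.ofLp z‖) {z g : EuclideanSpace ℝ ι}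
    (hg : ∀ y, f y ≥ f z + ⟪g, y - z⟫) {j : ι} (hj : |z j| < ‖WithLp.ofLp z‖) : g j = 0 := by
  set t := ‖WithLp.ofLp z‖ - |z j|
  have ht : 0 < t := sub_pos.2 hj
  have hflat : ∀ s, |s| = t → f (z + single j s) = f z := fun s hs => by
    rw [hf, hf, norm_ofLp_add_single hj hs.le]
  have hplus := hg (z + single j t)
  have hminus := hg (z + single j (-t))
  rw [hflat t (abs_of_pos ht)] at hplus
  rw [hflat (-t) (by rw [abs_neg, abs_of_pos ht])] at hminus
  simp only [add_sub_cancel_left, inner_single_right, conj_trivial] at hplus hminus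
  exact (mul_eq_zero.1 (le_antisymm (by linarith) (by linarith))).resolve_left ht.ne'

end EuclideanSpace

open EuclideanSpace

section SubgradientSupport

variable {n : ℕ} {φ : ℝ → ℝ} {f : EuclideanSpace ℝ (Fin (n + 1)) → ℝ}
  {a : EuclideanSpace ℝ (Fin (n + 1))}

theorem subgradient_apply_eq_zero_of_lt (hf : ∀ z, f z = φ ‖WithLp.ofLp z‖)
    (ha : StrictAnti fun j => |a j|) {z g : EuclideanSpace ℝ (Fin (n + 1))}
    (hg : ∀ y, f y ≥ f z + ⟪g, y - z⟫) {i : Fin (n + 1)} (hz : ∀ j, i ≤ j → z j = a j)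
    {j : Fin (n + 1)} (hij : i < j) : g j = 0 :=
  subgradient_apply_eq_zero_of_abs_lt hf hg <|
    calc |z j| = |a j| := by rw [hz j hij.le]
      _ < |a i| := ha hij
      _ = |z i| := by rw [hz i le_rfl]
      _ ≤ ‖WithLp.ofLp z‖ := norm_le_pi_norm (WithLp.ofLp z) i

theorem apply_eq_of_mem_span_subgradients (hf : ∀ z, f z = φ ‖WithLp.ofLp z‖)
    (ha : StrictAnti fun j => |a j|) {x g : ℕ → EuclideanSpace ℝ (Fin (n + 1))} (hx0 : x 0 = a)
    (hg : ∀ i < n, ∀ y, f y ≥ f (x i) + ⟪g i, y - x i⟫)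
    (hspan : ∀ k, 1 ≤ k → k ≤ n → x k - x 0 ∈ Submodule.span ℝ (g '' {i : ℕ | i < k})) :
    ∀ k ≤ n, ∀ j : Fin (n + 1), k ≤ (j : ℕ) → x k j = a j := by
  intro k
  induction k using Nat.strong_induction_on with
  | _ k ih =>
  intro hk j hkj
  rcases Nat.eq_zero_or_pos k with rfl | hk1
  · rw [hx0]
  have hker :
      x k - x 0 ∈ LinearMap.ker (proj j : EuclideanSpace ℝ (Fin (n + 1)) →L[ℝ] ℝ).toLinearMap := by
    refine Submodule.span_le.2 ?_ (hspan k hk1 hk)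
    rintro _ ⟨i, hi : i < k, rfl⟩
    have hin : i < n := lt_of_lt_of_le hi hk
    exact subgradient_apply_eq_zero_of_lt hf ha (hg i hin) (i := ⟨i, by omega⟩)
      (fun l hl => ih i hi hin.le l hl) (show i < (j : ℕ) by omega)
  simpa [hx0, sub_eq_zero] using hker

end SubgradientSupport

section Ramp

variable {n : ℕ} {ε : ℝ} {a : EuclideanSpace ℝ (Fin (n + 1))}

theorem one_sub_mul_div_mem_Icc (hn : 1 ≤ n) (hε : 0 ≤ ε) {i : ℕ} (hi : i ≤ n) :
    1 - i * ε / n ∈ Set.Icc (1 - ε) 1 := by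
  have hn' : (0 : ℝ) < n := by exact_mod_cast hn
  have hi' : (i : ℝ) ≤ n := by exact_mod_cast hi
  constructor
  · have : i * ε / n ≤ ε := by rw [div_le_iff₀ hn']; nlinarith
    linarith
  · have : 0 ≤ i * ε / n := by positivity
    linarith

theorem abs_apply_le_one_of_ramp (hn : 1 ≤ n) (hε0 : 0 < ε) (hε1 : ε < 1)
    (ha : ∀ i : Fin (n + 1), a i = 1 - (i : ℝ) * ε / n) (i : Fin (n + 1)) : |a i| ≤ 1 := by
  obtain ⟨hlow, hup⟩ := one_sub_mul_div_mem_Icc hn hε0.le (Nat.lt_succ_iff.1 i.isLt)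
  rw [ha, abs_le]
  constructor <;> linarith

theorem strictAnti_abs_of_ramp (hn : 1 ≤ n) (hε0 : 0 < ε) (hε1 : ε < 1)
    (ha : ∀ i : Fin (n + 1), a i = 1 - (i : ℝ) * ε / n) : StrictAnti fun i => |a i| := by
  have hpos : ∀ i : Fin (n + 1), 0 < a i := fun i => by
    rw [ha]
    linarith [(one_sub_mul_div_mem_Icc hn hε0.le (Nat.lt_succ_iff.1 i.isLt)).1]
  intro i j hij
  have hn' : (0 : ℝ) < n := by exact_mod_cast hn
  have hij' : (i : ℝ) < j := by exact_mod_cast hij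
  show |a j| < |a i|
  rw [abs_of_pos (hpos i), abs_of_pos (hpos j), ha, ha]
  gcongr

end Ramp

theorem first_order_lower_bound_span
    (L : ℝ) (hL : 0 < L) (n : ℕ) (hn : 1 ≤ n)
    (ε : ℝ) (hε0 : 0 < ε) (hε1 : ε < 1)
    (f : EuclideanSpace ℝ (Fin (n + 1)) → ℝ)
    (hf : ∀ z, f z = L / 2 * (⨆ i, |z i|) ^ 2)
    (x0 : EuclideanSpace ℝ (Fin (n + 1)))
    (hx0 : ∀ i : Fin (n + 1), x0 i = 1 - (i : ℝ) * ε / n) :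
    ConvexOn ℝ Set.univ f ∧
    {z | ∀ y, f z ≤ f y} = {0} ∧
    f 0 = 0 ∧
    (∀ z, f z - 0 ≤ L / 2 * Metric.infDist z ({0} : Set (EuclideanSpace ℝ (Fin (n + 1)))) ^ 2) ∧
    ∀ (x g : ℕ → EuclideanSpace ℝ (Fin (n + 1))),
      x 0 = x0 →
      (∀ i < n, ∀ y, f y ≥ f (x i) + ⟪g i, y - x i⟫) →
      (∀ k, 1 ≤ k → k ≤ n → x k - x 0 ∈ Submodule.span ℝ (g '' {i : ℕ | i < k})) →
      f (x n) - 0 ≥ L / 2 * (1 - ε) ^ 2 ∧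
      L / 2 * (1 - ε) ^ 2 ≥ (1 - ε) ^ 2 * (L / (2 * ((n : ℝ) + 1))) *
          Metric.infDist x0 ({0} : Set (EuclideanSpace ℝ (Fin (n + 1)))) ^ 2 := by
  have hf' : ∀ z, f z = L / 2 * ‖WithLp.ofLp z‖ ^ 2 := fun z => by
    rw [hf, iSup_abs_eq_norm_ofLp]
  have hf0 : f 0 = 0 := by simp [hf']
  simp only [Metric.infDist_singleton, dist_zero_right, sub_zero]
  refine ⟨?_, ?_, hf0, fun z => ?_, fun x g hx hg hspan => ⟨?_, ?_⟩⟩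
  · rw [funext hf']
    exact convexOn_sq_norm_ofLp.smul (by positivity)
  · ext z
    simp only [Set.mem_ofPred_eq, Set.mem_singleton_iff]
    refine ⟨fun h => ?_, fun h y => by rw [h, hf0, hf']; positivity⟩
    have h0 : L / 2 * ‖WithLp.ofLp z‖ ^ 2 ≤ 0 := by simpa [hf0, hf'] using h 0
    simpa [hL.ne'] using le_antisymm h0 (by positivity)
  · rw [hf']
    gcongr
    exact norm_ofLp_le z
  · have hagree := apply_eq_of_mem_span_subgradients (φ := fun r => L / 2 * r ^ 2) hf'
      (strictAnti_abs_of_ramp hn hε0 hε1 hx0) hx hg hspan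
    have hlast : x n (Fin.last n) = 1 - ε := by
      rw [hagree n le_rfl (Fin.last n) le_rfl, hx0]
      have : (n : ℝ) ≠ 0 := by positivity
      simp [this]
    rw [hf', ← hlast, ← sq_abs (x n (Fin.last n))]
    gcongr
    exact norm_le_pi_norm (WithLp.ofLp (x n)) _
  · calc (1 - ε) ^ 2 * (L / (2 * ((n : ℝ) + 1))) * ‖x0‖ ^ 2
        ≤ (1 - ε) ^ 2 * (L / (2 * ((n : ℝ) + 1))) * ((n : ℝ) + 1) := by
          gcongr
          simpa using norm_sq_le_card (abs_apply_le_one_of_ramp hn hε0 hε1 hx0)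
      _ = L / 2 * (1 - ε) ^ 2 := by field_simp
end

section
/- Let L > 0 and let f : E → ℝ be convex with nonempty minimizer set X* and minimum value f*, and suppose f is L-QG+. Let n ∈ ℕ, let x_0, x_1, …, x_n ∈ E and g_0, g_1, …, g_n ∈ E with g_k ∈ ∂f(x_k) for 0 ≤ k ≤ n, and suppose that for every 1 ≤ k ≤ n: ⟨g_k, x_k − [ (k/(k+1))·x_{k−1} + (1/(k+1))·x_0 − (1/(k+1))·∑_{i=0}^{k−1} (1/L)·g_i ]⟩ ≤ 0. Then f(x_n) − f* ≤ (L/(2(n+1)))·d(x_0, X*)². -/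
open scoped RealInnerProductSpace

open Finset Metric

/-!
For `w ∈ X*`, a subgradient `g` of `f` at `x` and `z = w + g / L`, the subgradient inequality
at `z` together with `f z - f* ≤ (L/2) d(z, X*)² ≤ ‖g‖² / (2L)` gives
`f x - f* ≤ ⟪g, x - w⟫ - ‖g‖² / (2L)`. With `y_k = x₀ - (1/L) ∑_{i<k} g_i`, this, the
subgradient inequality between `x_k` and `x_{k-1}` and the hypothesis on `x_k` show that the
potential `k (f x_{k-1} - f*) + (L/2) ‖y_k - w‖²` does not increase; comparing `k = n + 1` with
`k = 0` gives `(n + 1) (f x_n - f*) ≤ (L/2) ‖x₀ - w‖²` for every `w ∈ X*`.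
-/

theorem le_mul_infDist_sq_of_forall_le_mul_dist_sq {α : Type*} [PseudoMetricSpace α]
    {s : Set α} {x : α} {a c : ℝ} (hs : s.Nonempty) (hc : 0 < c)
    (h : ∀ w ∈ s, a ≤ c * dist x w ^ 2) : a ≤ c * infDist x s ^ 2 := by
  have hsqrt : √(a / c) ≤ infDist x s := (le_infDist hs).2 fun w hw =>
    Real.sqrt_le_iff.2 ⟨dist_nonneg, (div_le_iff₀' hc).2 (h w hw)⟩
  exact (div_le_iff₀' hc).1 (Real.sqrt_le_iff.1 hsqrt).2

section

variable {E : Type*} [NormedAddCommGroup E] [InnerProductSpace ℝ E]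

theorem sub_le_inner_sub_sub_sq_div_of_subgradient {L fstar : ℝ} {f : E → ℝ} {s : Set E}
    {x g w : E} (hL : 0 < L) (hQG : ∀ z, f z - fstar ≤ L / 2 * infDist z s ^ 2)
    (hw : w ∈ s) (hg : ∀ y, f y ≥ f x + ⟪g, y - x⟫) :
    f x - fstar ≤ ⟪g, x - w⟫ - ‖g‖ ^ 2 / (2 * L) := by
  set z := w + (1 / L) • g
  have hdist : infDist z s ≤ ‖g‖ / L := by
    calc infDist z s ≤ dist z w := infDist_le_dist_of_mem hw
      _ = ‖g‖ / L := by
        rw [dist_eq_norm, add_sub_cancel_left, norm_smul, Real.norm_of_nonneg (by positivity)]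
        ring
  have hz : f z - fstar ≤ ‖g‖ ^ 2 / L - ‖g‖ ^ 2 / (2 * L) :=
    calc f z - fstar ≤ L / 2 * infDist z s ^ 2 := hQG z
      _ ≤ L / 2 * (‖g‖ / L) ^ 2 := by gcongr; exact infDist_nonneg
      _ = ‖g‖ ^ 2 / L - ‖g‖ ^ 2 / (2 * L) := by field_simp; ring
  have hinner : ⟪g, z - x⟫ = ⟪g, w - x⟫ + ‖g‖ ^ 2 / L := by
    rw [show z - x = (w - x) + (1 / L) • g by simp only [z]; abel, inner_add_right,
      real_inner_smul_right, real_inner_self_eq_norm_sq]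
    ring
  have hflip : ⟪g, x - w⟫ = -⟪g, w - x⟫ := by rw [← inner_neg_right, neg_sub]
  linarith [hg z]

theorem inner_smul_sub_sub_nonpos_of_inner_sub_nonpos {g x p q : E} {t : ℝ} (ht : 0 ≤ t)
    (h : ⟪g, x - ((t / (t + 1)) • p + (1 / (t + 1)) • q)⟫ ≤ 0) :
    ⟪g, (t + 1) • x - t • p - q⟫ ≤ 0 := by
  have hvec : (t + 1) • x - t • p - q
      = (t + 1) • (x - ((t / (t + 1)) • p + (1 / (t + 1)) • q)) := by
    rw [smul_sub, smul_add, smul_smul, smul_smul, mul_div_cancel₀ _ (by positivity),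
      mul_one_div_cancel (by positivity), one_smul, sub_add_eq_sub_sub]
  rw [hvec, real_inner_smul_right]
  exact mul_nonpos_of_nonneg_of_nonpos (by positivity) h

/-- `x (0 - 1) = x 0` is harmless: it carries the weight `0`. -/
noncomputable def potential (f : E → ℝ) (fstar L : ℝ) (x g : ℕ → E) (w : E) (k : ℕ) : ℝ :=
  k * (f (x (k - 1)) - fstar) + L / 2 * ‖x 0 - (1 / L) • ∑ i ∈ range k, g i - w‖ ^ 2

theorem potential_zero (f : E → ℝ) (fstar L : ℝ) (x g : ℕ → E) (w : E) :
    potential f fstar L x g w 0 = L / 2 * ‖x 0 - w‖ ^ 2 := by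
  simp [potential]

theorem potential_succ_le {f : E → ℝ} {fstar L : ℝ} {x g : ℕ → E} {w : E} {k : ℕ} (hL : 0 < L)
    (hkey : f (x k) - fstar ≤ ⟪g k, x k - w⟫ - ‖g k‖ ^ 2 / (2 * L))
    (hsub : f (x (k - 1)) ≥ f (x k) + ⟪g k, x (k - 1) - x k⟫)
    (hcond : ⟪g k, ((k : ℝ) + 1) • x k - (k : ℝ) • x (k - 1)
      - (x 0 - (1 / L) • ∑ i ∈ range k, g i)⟫ ≤ 0) :
    potential f fstar L x g w (k + 1) ≤ potential f fstar L x g w k := by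
  unfold potential
  rw [sum_range_succ, smul_add, show ∀ a b c : E, a - (b + c) - w = (a - b - w) - c by
    intros; abel]
  set y := x 0 - (1 / L) • ∑ i ∈ range k, g i
  rw [norm_sub_sq_real, norm_smul, real_inner_smul_right, Real.norm_of_nonneg (by positivity)]
  simp only [inner_sub_right, real_inner_smul_right, real_inner_comm (g k)] at hkey hsub hcond ⊢
  have hquad : L / 2 * (‖y - w‖ ^ 2 - 2 * (1 / L * (⟪g k, y⟫ - ⟪g k, w⟫)) + (1 / L * ‖g k‖) ^ 2)
      = L / 2 * ‖y - w‖ ^ 2 - (⟪g k, y⟫ - ⟪g k, w⟫) + ‖g k‖ ^ 2 / (2 * L) := by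
    field_simp
  push_cast
  rw [hquad]
  linarith [mul_le_mul_of_nonneg_left hsub (Nat.cast_nonneg k : (0 : ℝ) ≤ k)]

end

theorem sufficient_condition_worst_case_optimal_general
    {E : Type*} [NormedAddCommGroup E] [InnerProductSpace ℝ E]
    (L : ℝ) (hL : 0 < L) (f : E → ℝ)
    (Xstar : Set E) (hne : Xstar.Nonempty)
    (fstar : ℝ)
    (hQG : ∀ z, f z - fstar ≤ L / 2 * Metric.infDist z Xstar ^ 2)
    (n : ℕ) (x g : ℕ → E)
    (hsub : ∀ k ≤ n, ∀ y, f y ≥ f (x k) + ⟪g k, y - x k⟫)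
    (hcond : ∀ k, 1 ≤ k → k ≤ n →
      ⟪g k, x k - (((k : ℝ) / ((k : ℝ) + 1)) • x (k - 1) + ((1 : ℝ) / ((k : ℝ) + 1)) • x 0
        - ((1 : ℝ) / ((k : ℝ) + 1)) • ∑ i ∈ Finset.range k, (1 / L) • g i)⟫ ≤ 0) :
    f (x n) - fstar ≤ L / (2 * ((n : ℝ) + 1)) * Metric.infDist (x 0) Xstar ^ 2 := by
  have hcond_scaled : ∀ k ≤ n, ⟪g k, ((k : ℝ) + 1) • x k - (k : ℝ) • x (k - 1)
      - (x 0 - (1 / L) • ∑ i ∈ range k, g i)⟫ ≤ 0 := by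
    rintro (_ | k) hk
    · simp
    · refine inner_smul_sub_sub_nonpos_of_inner_sub_nonpos (Nat.cast_nonneg _) ?_
      simpa only [smul_sub, ← smul_sum, add_sub_assoc] using hcond (k + 1) (by omega) hk
  have hpot : ∀ w ∈ Xstar, ∀ k ≤ n + 1,
      potential f fstar L x g w k ≤ potential f fstar L x g w 0 := by
    intro w hw k hk
    induction k with
    | zero => rfl
    | succ k ih =>
      refine (potential_succ_le hL ?_ (hsub k (by omega) _) (hcond_scaled k (by omega))).trans
        (ih (by omega))
      exact sub_le_inner_sub_sub_sq_div_of_subgradient hL hQG hw (hsub k (by omega))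
  refine le_mul_infDist_sq_of_forall_le_mul_dist_sq hne (by positivity) fun w hw => ?_
  have h := hpot w hw (n + 1) le_rfl
  rw [potential_zero, potential, ← dist_eq_norm (x 0) w] at h
  push_cast at h
  rw [div_mul_eq_mul_div, le_div_iff₀ (by positivity)]
  linarith [mul_nonneg hL.le (sq_nonneg ‖x 0 - (1 / L) • ∑ i ∈ range (n + 1), g i - w‖)]

theorem sufficient_condition_worst_case_optimal
    {E : Type*} [NormedAddCommGroup E] [InnerProductSpace ℝ E] [FiniteDimensional ℝ E]
    (L : ℝ) (hL : 0 < L) (f : E → ℝ) (hconv : ConvexOn ℝ Set.univ f)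
    (Xstar : Set E) (hXstar : Xstar = {z | ∀ y, f z ≤ f y}) (hne : Xstar.Nonempty)
    (fstar : ℝ) (hfstar : ∀ z ∈ Xstar, f z = fstar)
    (hQG : ∀ z, f z - fstar ≤ L / 2 * Metric.infDist z Xstar ^ 2)
    (n : ℕ) (x g : ℕ → E)
    (hsub : ∀ k ≤ n, ∀ y, f y ≥ f (x k) + ⟪g k, y - x k⟫)
    (hcond : ∀ k, 1 ≤ k → k ≤ n →
      ⟪g k, x k - (((k : ℝ) / ((k : ℝ) + 1)) • x (k - 1) + ((1 : ℝ) / ((k : ℝ) + 1)) • x 0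
        - ((1 : ℝ) / ((k : ℝ) + 1)) • ∑ i ∈ Finset.range k, (1 / L) • g i)⟫ ≤ 0) :
    f (x n) - fstar ≤ L / (2 * ((n : ℝ) + 1)) * Metric.infDist (x 0) Xstar ^ 2 :=
  sufficient_condition_worst_case_optimal_general L hL f Xstar hne fstar hQG n x g hsub hcond
end

section
/- Let L > 0 and let f : E → ℝ be convex with nonempty minimizer set X* and minimum value f*, and suppose f is L-QG+. Then for every minimizer x* ∈ X*, every x ∈ E and every g ∈ ∂f(x): f* ≥ f(x) + ⟨g, x* − x⟩ + (1/(2L))·‖g‖². -/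
open scoped RealInnerProductSpace

theorem sub_le_half_mul_dist_sq_of_mem {X : Type*} [PseudoMetricSpace X] {f : X → ℝ} {c L : ℝ}
    {S : Set X} (hL : 0 ≤ L) (hQG : ∀ z, f z - c ≤ L / 2 * Metric.infDist z S ^ 2)
    {p : X} (hp : p ∈ S) (z : X) : f z - c ≤ L / 2 * dist z p ^ 2 := by
  refine (hQG z).trans ?_
  have hdist := Metric.infDist_le_dist_of_mem (x := z) hp
  gcongr
  exact Metric.infDist_nonneg

theorem le_apply_add_smul_of_subgradient {E : Type*} [NormedAddCommGroup E]
    [InnerProductSpace ℝ E] {f : E → ℝ} {x g : E} (hsub : ∀ y, f y ≥ f x + ⟪g, y - x⟫)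
    (p : E) (t : ℝ) : f x + ⟪g, p - x⟫ + t * ‖g‖ ^ 2 ≤ f (p + t • g) := by
  have hshift : p + t • g - x = (p - x) + t • g := by abel
  have hp := hsub (p + t • g)
  rw [hshift, inner_add_right, real_inner_smul_right, real_inner_self_eq_norm_sq] at hp
  linarith

/-- Step from a minimizer by `g / L`: the subgradient inequality gains `‖g‖² / L` there, while
quadratic growth costs at most `‖g‖² / (2L)`. -/
theorem qg_convex_subgradient_inequality_general
    {E : Type*} [NormedAddCommGroup E] [InnerProductSpace ℝ E]
    (L : ℝ) (hL : 0 < L) (f : E → ℝ) (Xstar : Set E) (fstar : ℝ)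
    (hQG : ∀ z, f z - fstar ≤ L / 2 * Metric.infDist z Xstar ^ 2)
    (xstar : E) (hxstar : xstar ∈ Xstar)
    (x g : E) (hsub : ∀ y, f y ≥ f x + ⟪g, y - x⟫) :
    fstar ≥ f x + ⟪g, xstar - x⟫ + 1 / (2 * L) * ‖g‖ ^ 2 := by
  have hlower := le_apply_add_smul_of_subgradient hsub xstar L⁻¹
  have hupper := sub_le_half_mul_dist_sq_of_mem hL.le hQG hxstar (xstar + L⁻¹ • g)
  have hdist : dist (xstar + L⁻¹ • g) xstar = L⁻¹ * ‖g‖ := by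
    rw [dist_self_add_left, norm_smul, Real.norm_of_nonneg (inv_nonneg.mpr hL.le)]
  have hcost : L / 2 * (L⁻¹ * ‖g‖) ^ 2 = L⁻¹ * ‖g‖ ^ 2 - 1 / (2 * L) * ‖g‖ ^ 2 := by
    field_simp
    ring
  rw [hdist, hcost] at hupper
  linarith

theorem qg_convex_subgradient_inequality
    {E : Type*} [NormedAddCommGroup E] [InnerProductSpace ℝ E] [FiniteDimensional ℝ E]
    (L : ℝ) (hL : 0 < L) (f : E → ℝ) (hconv : ConvexOn ℝ Set.univ f)
    (Xstar : Set E) (hXstar : Xstar = {z | ∀ y, f z ≤ f y}) (hne : Xstar.Nonempty)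
    (fstar : ℝ) (hfstar : ∀ z ∈ Xstar, f z = fstar)
    (hQG : ∀ z, f z - fstar ≤ L / 2 * Metric.infDist z Xstar ^ 2)
    (xstar : E) (hxstar : xstar ∈ Xstar)
    (x g : E) (hsub : ∀ y, f y ≥ f x + ⟪g, y - x⟫) :
    fstar ≥ f x + ⟪g, xstar - x⟫ + 1 / (2 * L) * ‖g‖ ^ 2 :=
  qg_convex_subgradient_inequality_general L hL f Xstar fstar hQG xstar hxstar x g hsub
end

section
/- Let h : [0, ∞) → [0, ∞) be a bijective, strictly increasing, continuous and concave function with h(0) = 0, and let h⁻¹ : [0, ∞) → [0, ∞) be its inverse. Let f : E → ℝ be convex with nonempty minimizer set X* and minimum value f*, and suppose f is h-RG+, i.e. f(x) − f* ≤ h(d(x, X*)²) for all x ∈ E. Then the function g : E → ℝ defined by g(x) = h⁻¹(f(x) − f*) is convex, its minimizer set is the same set X* with minimum value 0, and g(x) ≤ d(x, X*)² for all x ∈ E (i.e. g is 2-QG+). -/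
theorem rg_plus_transform_is_qg_plus
    {E : Type*} [NormedAddCommGroup E] [InnerProductSpace ℝ E] [FiniteDimensional ℝ E]
    (h hinv : ℝ → ℝ)
    (hbij : Set.BijOn h (Set.Ici 0) (Set.Ici 0))
    (hmono : StrictMonoOn h (Set.Ici 0))
    (hcont : ContinuousOn h (Set.Ici 0))
    (hconc : ConcaveOn ℝ (Set.Ici 0) h)
    (h0 : h 0 = 0)
    (hinvOn : Set.InvOn hinv h (Set.Ici 0) (Set.Ici 0))
    (f : E → ℝ) (hconv : ConvexOn ℝ Set.univ f)
    (Xstar : Set E) (hXstar : Xstar = {z | ∀ y, f z ≤ f y}) (hne : Xstar.Nonempty)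
    (fstar : ℝ) (hfstar : ∀ z ∈ Xstar, f z = fstar)
    (hRG : ∀ z, f z - fstar ≤ h (Metric.infDist z Xstar ^ 2))
    (gfun : E → ℝ) (hg : ∀ z, gfun z = hinv (f z - fstar)) :
    ConvexOn ℝ Set.univ gfun ∧
    {z | ∀ y, gfun z ≤ gfun y} = Xstar ∧
    (∀ z ∈ Xstar, gfun z = 0) ∧
    (∀ z, gfun z ≤ Metric.infDist z Xstar ^ 2) := by
  obtain ⟨z₀, hz₀⟩ := hne
  have hz₀' : ∀ y, f z₀ ≤ f y := by rw [hXstar] at hz₀; exact hz₀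
  have hf0 : f z₀ = fstar := hfstar z₀ hz₀
  have hfmin : ∀ y, fstar ≤ f y := fun y => hf0 ▸ hz₀' y
  have hnn : ∀ z, (0:ℝ) ≤ f z - fstar := fun z => by linarith [hfmin z]
  have hinv0 : hinv 0 = 0 := by
    have := hinvOn.1 (Set.self_mem_Ici (a := (0:ℝ)))
    rwa [h0] at this
  have hinv_mem : ∀ a : ℝ, 0 ≤ a → 0 ≤ hinv a ∧ h (hinv a) = a := by
    intro a ha
    obtain ⟨x, hx, hxa⟩ := hbij.surjOn ha
    have hxi : hinv a = x := by rw [← hxa, hinvOn.1 hx]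
    exact ⟨hxi ▸ hx, by rw [hxi, hxa]⟩
  have hinv_le_iff : ∀ a b : ℝ, 0 ≤ a → 0 ≤ b → (hinv a ≤ hinv b ↔ a ≤ b) := by
    intro a b ha hb
    have := hmono.le_iff_le (hinv_mem a ha).1 (hinv_mem b hb).1
    rw [(hinv_mem a ha).2, (hinv_mem b hb).2] at this
    exact this.symm
  have hinv_conv : ∀ a b t s : ℝ, 0 ≤ a → 0 ≤ b → 0 ≤ t → 0 ≤ s → t + s = 1 →
      hinv (t * a + s * b) ≤ t * hinv a + s * hinv b := by
    intro a b t s ha hb ht hs hts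
    set x := hinv a with hxdef
    set y := hinv b with hydef
    have hx := hinv_mem a ha
    have hy := hinv_mem b hb
    have hxy : (0:ℝ) ≤ t * x + s * y :=
      add_nonneg (mul_nonneg ht hx.1) (mul_nonneg hs hy.1)
    have hcc := hconc.2 hx.1 hy.1 ht hs hts
    simp only [smul_eq_mul] at hcc
    rw [hx.2, hy.2] at hcc
    have hh : (0:ℝ) ≤ h (t * x + s * y) := hbij.mapsTo hxy
    have h1 : hinv (t * a + s * b) ≤ hinv (h (t * x + s * y)) :=
      (hinv_le_iff _ _ (by positivity) hh).2 hcc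
    rwa [hinvOn.1 hxy] at h1
  refine ⟨⟨convex_univ, ?_⟩, ?_, ?_, ?_⟩
  · intro x _ y _ a b ha hb hab
    simp only [smul_eq_mul, hg]
    have hcv := hconv.2 (Set.mem_univ x) (Set.mem_univ y) ha hb hab
    simp only [smul_eq_mul] at hcv
    have hfs : a * fstar + b * fstar = fstar := by rw [← add_mul, hab, one_mul]
    have h1 : f (a • x + b • y) - fstar ≤ a * (f x - fstar) + b * (f y - fstar) := by
      ring_nf; ring_nf at hfs hcv ⊢; linarith
    calc hinv (f (a • x + b • y) - fstar)
        ≤ hinv (a * (f x - fstar) + b * (f y - fstar)) := by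
          exact (hinv_le_iff _ _ (hnn _)
            (add_nonneg (mul_nonneg ha (hnn x)) (mul_nonneg hb (hnn y)))).2 h1
      _ ≤ a * hinv (f x - fstar) + b * hinv (f y - fstar) :=
          hinv_conv _ _ _ _ (hnn x) (hnn y) ha hb hab
  · ext z
    simp only [Set.mem_setOf_eq, hg, hXstar]
    constructor
    · intro hz y
      have := (hinv_le_iff _ _ (hnn z) (hnn y)).1 (hz y)
      linarith
    · intro hz y
      exact (hinv_le_iff _ _ (hnn z) (hnn y)).2 (by linarith [hz y])
  · intro z hz
    rw [hg, hfstar z hz, sub_self, hinv0]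
  · intro z
    have hd : (0:ℝ) ≤ Metric.infDist z Xstar ^ 2 := sq_nonneg _
    have hh : (0:ℝ) ≤ h (Metric.infDist z Xstar ^ 2) := hbij.mapsTo hd
    have := (hinv_le_iff _ _ (hnn z) hh).2 (hRG z)
    rw [hinvOn.1 hd] at this
    rwa [hg]
end

section
/- Let M > 0 and let f : E → ℝ be convex, M-Lipschitz, with nonempty minimizer set X* and minimum value f*. Let x_0 ∈ E and define iterates: for k ≥ 1, pick g_{k−1} ∈ ∂f(x_{k−1}), set γ_{k−1} = (f(x_{k−1}) − f*)/((k+1)·M²), and set x_k = x_{k−1} − γ_{k−1}·g_{k−1} + ((k−1)/(k+1))·(x_{k−1} − x_{k−2}) (the momentum term being absent for k = 1). Then for every n ∈ ℕ: f(x_n) − f* ≤ M·d(x_0, X*)/√(n+1). -/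
/-!
With `y k = (k + 1) x k - k x (k - 1)`, the heavy-ball update becomes the plain subgradient step
`y (k + 1) = y k - (Δ k / M²) g k`, where `Δ k = f (x k) - f*`. For every minimizer `z` the
subgradient inequality at `x k`, tested against `z` and `x (k - 1)`, gives
`⟪g k, y k - z⟫ ≥ (k + 1) Δ k - k Δ (k - 1)`, and together with `‖g k‖ ≤ M` this makes
`‖y k - z‖² + (k / M²) Δ (k - 1)²` nonincreasing, the defect being `(k / M²) (Δ k - Δ (k - 1))²`.
Its initial value is `‖x 0 - z‖²`, hence `(n + 1) Δ n² ≤ M² ‖x 0 - z‖²`.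
-/

open scoped RealInnerProductSpace

section HeavyBall

variable {E : Type*} [NormedAddCommGroup E] [InnerProductSpace ℝ E]

theorem norm_le_of_subgradient_of_lipschitz {f : E → ℝ} {M : ℝ} {p g : E} (hM : 0 ≤ M)
    (hLip : ∀ a b : E, |f a - f b| ≤ M * ‖a - b‖) (hg : ∀ y, f y ≥ f p + ⟪g, y - p⟫) :
    ‖g‖ ≤ M := by
  have hsq : ‖g‖ ^ 2 ≤ M * ‖g‖ := calc
    ‖g‖ ^ 2 = ⟪g, (p + g) - p⟫ := by rw [add_sub_cancel_left, real_inner_self_eq_norm_sq]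
    _ ≤ f (p + g) - f p := by linarith [hg (p + g)]
    _ ≤ M * ‖(p + g) - p‖ := (abs_le.mp (hLip _ _)).2
    _ = M * ‖g‖ := by rw [add_sub_cancel_left]
  rcases (norm_nonneg g).eq_or_lt with h | h
  · rwa [← h]
  · nlinarith

theorem subgradient_inner_sub_ge {f : E → ℝ} {p g q z : E} {s : ℝ} (hs : 0 ≤ s)
    (hg : ∀ y, f y ≥ f p + ⟪g, y - p⟫) :
    (s + 1) * f p - s * f q - f z ≤ ⟪g, ((s + 1) • p - s • q) - z⟫ := by
  have hz := hg z
  have hq := hg q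
  have hsplit : ((s + 1) • p - s • q) - z = -(z - p) - s • (q - p) := by module
  rw [hsplit, inner_sub_right, inner_neg_right, real_inner_smul_right]
  nlinarith

theorem norm_sub_smul_sq_add_le {u g : E} {M a b s : ℝ} (hM : 0 < M) (ha : 0 ≤ a) (hs : 0 ≤ s)
    (hg : ‖g‖ ≤ M) (hinner : (s + 1) * a - s * b ≤ ⟪g, u⟫) :
    ‖u - (a / M ^ 2) • g‖ ^ 2 + ((s + 1) / M ^ 2) * a ^ 2 ≤ ‖u‖ ^ 2 + (s / M ^ 2) * b ^ 2 := by
  have hM2 : 0 < M ^ 2 := by positivity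
  have hexpand : ‖u - (a / M ^ 2) • g‖ ^ 2
      = ‖u‖ ^ 2 - 2 * (a / M ^ 2) * ⟪g, u⟫ + (a / M ^ 2) ^ 2 * ‖g‖ ^ 2 := by
    rw [norm_sub_sq_real, real_inner_smul_right, real_inner_comm, norm_smul, mul_pow,
      Real.norm_eq_abs, sq_abs]
    ring
  have hgsq : (a / M ^ 2) ^ 2 * ‖g‖ ^ 2 ≤ (a / M ^ 2) ^ 2 * M ^ 2 := by
    gcongr
  have hdescent : 2 * (a / M ^ 2) * ((s + 1) * a - s * b) ≤ 2 * (a / M ^ 2) * ⟪g, u⟫ := by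
    gcongr
  have hdefect : 0 ≤ (s / M ^ 2) * (a - b) ^ 2 := by positivity
  have hid : (s + 1) / M ^ 2 * a ^ 2 - 2 * (a / M ^ 2) * ((s + 1) * a - s * b)
      + (a / M ^ 2) ^ 2 * M ^ 2 = s / M ^ 2 * b ^ 2 - (s / M ^ 2) * (a - b) ^ 2 := by
    field_simp
    ring
  linarith

noncomputable def momentumAverage (x : ℕ → E) (k : ℕ) : E :=
  ((k : ℝ) + 1) • x k - (k : ℝ) • x (k - 1)

@[simp]
theorem momentumAverage_zero (x : ℕ → E) : momentumAverage x 0 = x 0 := by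
  simp [momentumAverage]

theorem momentumAverage_succ {x g : ℕ → E} {γ : ℕ → ℝ}
    (hupd : ∀ k, 1 ≤ k →
      x k = x (k - 1) - γ (k - 1) • g (k - 1)
        + ((((k : ℝ) - 1) / ((k : ℝ) + 1)) • (x (k - 1) - x (k - 2))))
    (k : ℕ) :
    momentumAverage x (k + 1) = momentumAverage x k - (((k : ℝ) + 2) * γ k) • g k := by
  have hx := hupd (k + 1) le_add_self
  rw [Nat.add_sub_cancel, show k + 1 - 2 = k - 1 by omega] at hx
  have hk : (k : ℝ) + 2 ≠ 0 := by positivity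
  simp only [momentumAverage, Nat.add_sub_cancel, hx]
  push_cast
  match_scalars <;> field_simp <;> ring

theorem heavy_ball_potential_le {f : E → ℝ} {M : ℝ} (hM : 0 < M) {x g : ℕ → E} {γ : ℕ → ℝ}
    {z : E} (hz : ∀ y, f z ≤ f y) (hgM : ∀ k, ‖g k‖ ≤ M)
    (hsub : ∀ k, ∀ y, f y ≥ f (x k) + ⟪g k, y - x k⟫)
    (hγ : ∀ k, γ k = (f (x k) - f z) / (((k : ℝ) + 2) * M ^ 2))
    (hupd : ∀ k, 1 ≤ k →
      x k = x (k - 1) - γ (k - 1) • g (k - 1)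
        + ((((k : ℝ) - 1) / ((k : ℝ) + 1)) • (x (k - 1) - x (k - 2))))
    (n : ℕ) :
    ‖momentumAverage x n - z‖ ^ 2 + ((n : ℝ) / M ^ 2) * (f (x (n - 1)) - f z) ^ 2
      ≤ ‖x 0 - z‖ ^ 2 := by
  induction n with
  | zero => simp
  | succ n ih =>
    have hstep : momentumAverage x (n + 1) - z
        = (momentumAverage x n - z) - ((f (x n) - f z) / M ^ 2) • g n := by
      have hk : (n : ℝ) + 2 ≠ 0 := by positivity
      rw [momentumAverage_succ hupd, hγ, mul_div_assoc', mul_div_mul_left _ _ hk]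
      abel
    have hinner : ((n : ℝ) + 1) * (f (x n) - f z) - n * (f (x (n - 1)) - f z)
        ≤ ⟪g n, momentumAverage x n - z⟫ := by
      have := subgradient_inner_sub_ge (q := x (n - 1)) (z := z) n.cast_nonneg (hsub n)
      rw [momentumAverage]
      linarith
    have := norm_sub_smul_sq_add_le hM (sub_nonneg.2 (hz (x n))) n.cast_nonneg (hgM n) hinner
    rw [hstep, Nat.add_sub_cancel, Nat.cast_succ]
    linarith

theorem mul_sqrt_le_of_sq_mul_le {a b c : ℝ} (ha : 0 ≤ a) (hb : 0 ≤ b) (h : a ^ 2 * c ≤ b ^ 2) :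
    a * Real.sqrt c ≤ b := calc
  a * Real.sqrt c = Real.sqrt (a ^ 2 * c) := by rw [Real.sqrt_mul (sq_nonneg a), Real.sqrt_sq ha]
  _ ≤ Real.sqrt (b ^ 2) := Real.sqrt_le_sqrt h
  _ = b := Real.sqrt_sq hb

end HeavyBall

theorem heavy_ball_lipschitz_guarantee_general
    {E : Type*} [NormedAddCommGroup E] [InnerProductSpace ℝ E]
    (M : ℝ) (hM : 0 < M)
    (f : E → ℝ)
    (hLip : ∀ a b : E, |f a - f b| ≤ M * ‖a - b‖)
    (Xstar : Set E) (hXstar : Xstar = {z | ∀ y, f z ≤ f y}) (hne : Xstar.Nonempty)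
    (fstar : ℝ) (hfstar : ∀ z ∈ Xstar, f z = fstar)
    (x g : ℕ → E) (γ : ℕ → ℝ)
    (hsub : ∀ k, ∀ y, f y ≥ f (x k) + ⟪g k, y - x k⟫)
    (hγ : ∀ k, γ k = (f (x k) - fstar) / (((k : ℝ) + 2) * M ^ 2))
    (hupd : ∀ k, 1 ≤ k →
      x k = x (k - 1) - γ (k - 1) • g (k - 1)
        + ((((k : ℝ) - 1) / ((k : ℝ) + 1)) • (x (k - 1) - x (k - 2)))) :
    ∀ n : ℕ,
      f (x n) - fstar ≤ M * Metric.infDist (x 0) Xstar / Real.sqrt ((n : ℝ) + 1) := by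
  intro n
  have hgM : ∀ k, ‖g k‖ ≤ M := fun k =>
    norm_le_of_subgradient_of_lipschitz hM.le hLip (hsub k)
  have hdist : ∀ z ∈ Xstar, (f (x n) - fstar) * Real.sqrt ((n : ℝ) + 1) / M ≤ dist (x 0) z := by
    intro z hzX
    have hz : ∀ y, f z ≤ f y := by rwa [hXstar] at hzX
    rw [← hfstar z hzX] at hγ ⊢
    have hpot := heavy_ball_potential_le hM hz hgM hsub hγ hupd (n + 1)
    rw [Nat.add_sub_cancel, Nat.cast_succ] at hpot
    have hsq : (f (x n) - f z) ^ 2 * ((n : ℝ) + 1) ≤ (M * dist (x 0) z) ^ 2 := by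
      rw [dist_eq_norm, mul_pow, ← div_le_iff₀' (by positivity)]
      have hcomm : (f (x n) - f z) ^ 2 * ((n : ℝ) + 1) / M ^ 2
          = ((n : ℝ) + 1) / M ^ 2 * (f (x n) - f z) ^ 2 := by ring
      linarith [sq_nonneg ‖momentumAverage x (n + 1) - z‖]
    rw [div_le_iff₀ hM, mul_comm _ M]
    exact mul_sqrt_le_of_sq_mul_le (sub_nonneg.2 (hz _)) (by positivity) hsq
  have hinf := (Metric.le_infDist hne).2 hdist
  rw [div_le_iff₀ hM] at hinf
  rw [le_div_iff₀ (Real.sqrt_pos.2 (by positivity))]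
  linarith

theorem heavy_ball_lipschitz_guarantee
    {E : Type*} [NormedAddCommGroup E] [InnerProductSpace ℝ E] [FiniteDimensional ℝ E]
    (M : ℝ) (hM : 0 < M)
    (f : E → ℝ) (hconv : ConvexOn ℝ Set.univ f)
    (hLip : ∀ a b : E, |f a - f b| ≤ M * ‖a - b‖)
    (Xstar : Set E) (hXstar : Xstar = {z | ∀ y, f z ≤ f y}) (hne : Xstar.Nonempty)
    (fstar : ℝ) (hfstar : ∀ z ∈ Xstar, f z = fstar)
    (x g : ℕ → E) (γ : ℕ → ℝ)
    (hsub : ∀ k, ∀ y, f y ≥ f (x k) + ⟪g k, y - x k⟫)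
    (hγ : ∀ k, γ k = (f (x k) - fstar) / (((k : ℝ) + 2) * M ^ 2))
    (hupd : ∀ k, 1 ≤ k →
      x k = x (k - 1) - γ (k - 1) • g (k - 1)
        + ((((k : ℝ) - 1) / ((k : ℝ) + 1)) • (x (k - 1) - x (k - 2)))) :
    ∀ n : ℕ,
      f (x n) - fstar ≤ M * Metric.infDist (x 0) Xstar / Real.sqrt ((n : ℝ) + 1) :=
  heavy_ball_lipschitz_guarantee_general M hM f hLip Xstar hXstar hne fstar hfstar x g γ hsub hγ
    hupd
end

section
/- Let h : [0, ∞) → [0, ∞) be bijective, strictly increasing, concave, with h(0) = 0, differentiable on (0, ∞) with h′ > 0 on (0, ∞). Let κ ≥ 1 and let f : E → ℝ be convex with nonempty minimizer set X* and minimum value f*, satisfying both f(x) − f* ≤ h(d(x, X*)²) and f(x) − f* ≥ h(d(x, X*)²/κ) for all x ∈ E. Let (x_k) be iterates of the heavy-ball method for h-RG+ functions: for k ≥ 1, pick g_{k−1} ∈ ∂f(x_{k−1}) (with g_{k−1} = 0 whenever f(x_{k−1}) = f*), set γ_{k−1} = 1/(2(k+1)·h′(h⁻¹(f(x_{k−1})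 − f*))) if f(x_{k−1}) > f* and γ_{k−1} = 0 otherwise, and set x_k = x_{k−1} − γ_{k−1}·g_{k−1} + ((k−1)/(k+1))·(x_{k−1} − x_{k−2}) (the momentum term being absent for k = 1). Then for every n ∈ ℕ: d(x_n, X*)² ≤ (κ/(n+1))·d(x_0, X*)². -/
/-!
Put `φ := h⁻¹ ∘ (f - f*)`. The two growth conditions say exactly
`d(·, X*)² / κ ≤ φ ≤ d(·, X*)²`, and since the concave `h` lies below its tangent at `φ x`,
the rescaled `g / h'(φ x)` is a subgradient of `φ` at `x` whenever `g ∈ ∂f(x)`.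
With `s_k := (k + 1) x_k - k x_{k-1}` the heavy-ball step reads `s_{k+1} = s_k - G_k / 2` with
`G_k = 2 (k + 2) γ_k g_k ∈ ∂φ(x_k)`, i.e. `x_k` is the running average of `s_0, …, s_k`.
For every `p ∈ X*` the bound `φ(p + G/2) ≤ ‖G‖² / 4` makes `‖s_k - p‖² + k φ(x_{k-1})`
nonincreasing, so `(n + 1) φ(x_n) ≤ d(x_0, X*)²`, and the lower growth condition turns this
into the claim.
-/

open scoped RealInnerProductSpace
open Set Metric

section InverseFunction

variable {α β : Type*} [LinearOrder α] [Preorder β] {f : α → β} {g : β → α} {s : Set α}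
  {t : Set β} {a : β} {b : α}

lemma StrictMonoOn.rightInvOn_le_iff (hf : StrictMonoOn f s) (hg : MapsTo g t s)
    (hfg : RightInvOn g f t) (ha : a ∈ t) (hb : b ∈ s) : g a ≤ b ↔ a ≤ f b := by
  rw [← hf.le_iff_le (hg ha) hb, hfg ha]

lemma StrictMonoOn.le_rightInvOn_iff (hf : StrictMonoOn f s) (hg : MapsTo g t s)
    (hfg : RightInvOn g f t) (ha : a ∈ t) (hb : b ∈ s) : b ≤ g a ↔ f b ≤ a := by
  rw [← hf.le_iff_le hb (hg ha), hfg ha]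

end InverseFunction

lemma ConcaveOn.le_add_mul_sub_of_hasDerivAt {S : Set ℝ} {f : ℝ → ℝ} {f' u c : ℝ}
    (hf : ConcaveOn ℝ S f) (hu : u ∈ S) (hc : c ∈ S) (hd : HasDerivAt f f' u) :
    f c ≤ f u + f' * (c - u) := by
  rcases lt_trichotomy c u with hcu | rfl | huc
  · have hslope := hf.le_slope_of_hasDerivAt hc hu hcu hd
    rw [slope_def_field, le_div_iff₀ (sub_pos.2 hcu)] at hslope
    linarith
  · simp
  · have hslope := hf.slope_le_of_hasDerivAt hu hc huc hd
    rw [slope_def_field, div_le_iff₀ (sub_pos.2 huc)] at hslope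
    linarith

lemma Metric.le_infDist_sq {M : Type*} [PseudoMetricSpace M] {X : Set M} {y : M} {r : ℝ}
    (hX : X.Nonempty) (hr : ∀ p ∈ X, r ≤ dist y p ^ 2) : r ≤ infDist y X ^ 2 := by
  rcases le_or_gt r 0 with hr0 | hr0
  · exact hr0.trans (sq_nonneg _)
  have hsqrt : √r ≤ infDist y X :=
    (le_infDist hX).2 fun p hp => Real.sqrt_le_iff.2 ⟨dist_nonneg, hr p hp⟩
  calc r = √r ^ 2 := (Real.sq_sqrt hr0.le).symm
    _ ≤ infDist y X ^ 2 := pow_le_pow_left₀ (Real.sqrt_nonneg r) hsqrt 2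

section Subgradient

variable {E : Type*} [NormedAddCommGroup E] [InnerProductSpace ℝ E]

def HasSubgradientAt (φ : E → ℝ) (g x : E) : Prop :=
  ∀ y, φ x + ⟪g, y - x⟫ ≤ φ y

variable {φ : E → ℝ} {g x : E}

lemma HasSubgradientAt.sub_const (hg : HasSubgradientAt φ g x) (c : ℝ) :
    HasSubgradientAt (fun y => φ y - c) g x := fun y => by
  linarith [hg y]

lemma hasSubgradientAt_zero_of_forall_le (hx : ∀ y, φ x ≤ φ y) : HasSubgradientAt φ 0 x :=
  fun y => by simpa using hx y

lemma HasSubgradientAt.of_comp_concaveOn {S : Set ℝ} {h : ℝ → ℝ} {d : ℝ}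
    (hg : HasSubgradientAt (fun y => h (φ y)) g x) (hh : ConcaveOn ℝ S h) (hφ : ∀ y, φ y ∈ S)
    (hd : HasDerivAt h d (φ x)) (hd0 : 0 < d) : HasSubgradientAt φ (d⁻¹ • g) x := by
  intro y
  have htangent := hh.le_add_mul_sub_of_hasDerivAt (hφ x) (hφ y) hd
  have hinner : d⁻¹ * ⟪g, y - x⟫ ≤ φ y - φ x :=
    (inv_mul_le_iff₀ hd0).2 (by linarith [hg y])
  rw [real_inner_smul_left]
  linarith

lemma HasSubgradientAt.add_norm_sq_div_four_le_inner {X : Set E} {p : E}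
    (hg : HasSubgradientAt φ g x) (hφ : ∀ y, φ y ≤ infDist y X ^ 2) (hp : p ∈ X) :
    φ x + ‖g‖ ^ 2 / 4 ≤ ⟪g, x - p⟫ := by
  have hdist : infDist (p + (2 : ℝ)⁻¹ • g) X ≤ ‖(2 : ℝ)⁻¹ • g‖ := by
    simpa [dist_eq_norm] using infDist_le_dist_of_mem (x := p + (2 : ℝ)⁻¹ • g) hp
  have hsq : φ (p + (2 : ℝ)⁻¹ • g) ≤ ‖g‖ ^ 2 / 4 := by
    refine (hφ _).trans ((pow_le_pow_left₀ infDist_nonneg hdist 2).trans_eq ?_)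
    rw [norm_smul]
    norm_num
    ring
  have hinner : ⟪g, p + (2 : ℝ)⁻¹ • g - x⟫ = -⟪g, x - p⟫ + ‖g‖ ^ 2 / 2 := by
    rw [show p + (2 : ℝ)⁻¹ • g - x = -(x - p) + (2 : ℝ)⁻¹ • g by abel, inner_add_right,
      inner_neg_right, real_inner_smul_right, real_inner_self_eq_norm_sq]
    ring
  linarith [hg (p + (2 : ℝ)⁻¹ • g)]

end Subgradient

section HeavyBall

variable {E : Type*} [NormedAddCommGroup E] [InnerProductSpace ℝ E]

/-- The heavy-ball iterate `x k` is the running average of `heavyBallAnchor x 0, …, k`.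
At `k = 0` the truncated index `x (0 - 1) = x 0` carries weight `0`. -/
def heavyBallAnchor (x : ℕ → E) (k : ℕ) : E :=
  ((k : ℝ) + 1) • x k - (k : ℝ) • x (k - 1)

@[simp]
lemma heavyBallAnchor_zero (x : ℕ → E) : heavyBallAnchor x 0 = x 0 := by
  simp [heavyBallAnchor]

lemma heavyBallAnchor_succ {x : ℕ → E} {k : ℕ} {v : E}
    (hx : x (k + 1) = x k - v + ((k : ℝ) / ((k : ℝ) + 2)) • (x k - x (k - 1))) :
    heavyBallAnchor x (k + 1) = heavyBallAnchor x k - ((k : ℝ) + 2) • v := by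
  have hk : (k : ℝ) + 2 ≠ 0 := by positivity
  simp only [heavyBallAnchor, Nat.add_sub_cancel, hx]
  push_cast
  match_scalars <;> field_simp <;> ring

variable {φ : E → ℝ} {X : Set E} {x G : ℕ → E} {p : E}

lemma heavyBall_lyapunov_step {k : ℕ} (hG : HasSubgradientAt φ (G k) (x k))
    (hs : heavyBallAnchor x (k + 1) = heavyBallAnchor x k - (2 : ℝ)⁻¹ • G k)
    (hφ : ∀ y, φ y ≤ infDist y X ^ 2) (hp : p ∈ X) :
    ‖heavyBallAnchor x (k + 1) - p‖ ^ 2 + ((k : ℝ) + 1) * φ (x k)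
      ≤ ‖heavyBallAnchor x k - p‖ ^ 2 + k * φ (x (k - 1)) := by
  set s := heavyBallAnchor x k
  have hnorm :
      ‖heavyBallAnchor x (k + 1) - p‖ ^ 2 = ‖s - p‖ ^ 2 - ⟪G k, s - p⟫ + ‖G k‖ ^ 2 / 4 := by
    rw [hs, show s - (2 : ℝ)⁻¹ • G k - p = (s - p) - (2 : ℝ)⁻¹ • G k by abel,
      norm_sub_sq_real, real_inner_smul_right, norm_smul, real_inner_comm]
    norm_num
    ring
  have hsplit : s - p = (x k - p) + (k : ℝ) • (x k - x (k - 1)) := by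
    simp only [s, heavyBallAnchor]
    module
  have hcenter := hG.add_norm_sq_div_four_le_inner hφ hp
  have hmomentum : φ (x k) - φ (x (k - 1)) ≤ ⟪G k, x k - x (k - 1)⟫ := by
    have := hG (x (k - 1))
    rw [← neg_sub, inner_neg_right] at this
    linarith
  have hinner :
      k * (φ (x k) - φ (x (k - 1))) + (φ (x k) + ‖G k‖ ^ 2 / 4) ≤ ⟪G k, s - p⟫ := by
    rw [hsplit, inner_add_right, real_inner_smul_right]
    nlinarith [(Nat.cast_nonneg k : (0 : ℝ) ≤ k)]
  rw [hnorm]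
  linarith

lemma heavyBall_lyapunov (hG : ∀ k, HasSubgradientAt φ (G k) (x k))
    (hs : ∀ k, heavyBallAnchor x (k + 1) = heavyBallAnchor x k - (2 : ℝ)⁻¹ • G k)
    (hφ : ∀ y, φ y ≤ infDist y X ^ 2) (hp : p ∈ X) (n : ℕ) :
    ‖heavyBallAnchor x n - p‖ ^ 2 + n * φ (x (n - 1)) ≤ ‖x 0 - p‖ ^ 2 := by
  induction n with
  | zero => simp
  | succ n ih =>
    have hstep := heavyBall_lyapunov_step (hG n) (hs n) hφ hp
    push_cast
    linarith

lemma heavyBall_succ_mul_le_infDist_sq (hG : ∀ k, HasSubgradientAt φ (G k) (x k))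
    (hs : ∀ k, heavyBallAnchor x (k + 1) = heavyBallAnchor x k - (2 : ℝ)⁻¹ • G k)
    (hφ : ∀ y, φ y ≤ infDist y X ^ 2) (hX : X.Nonempty) (n : ℕ) :
    ((n : ℝ) + 1) * φ (x n) ≤ infDist (x 0) X ^ 2 :=
  le_infDist_sq hX fun p hp => by
    have := heavyBall_lyapunov hG hs hφ hp (n + 1)
    push_cast at this
    rw [dist_eq_norm]
    nlinarith [sq_nonneg ‖heavyBallAnchor x (n + 1) - p‖]

end HeavyBall
section GrowthTransform

variable {E : Type*} [NormedAddCommGroup E] [InnerProductSpace ℝ E] {h hinv : ℝ → ℝ}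
  {f : E → ℝ} {fstar : ℝ} {g x : E}

lemma hasSubgradientAt_inv_comp_sub_of_lt {h' : ℝ → ℝ} (hconc : ConcaveOn ℝ (Ici 0) h)
    (h0 : h 0 = 0) (hderiv : ∀ t > (0 : ℝ), HasDerivAt h (h' t) t)
    (hpos : ∀ t > (0 : ℝ), 0 < h' t) (hinvMaps : MapsTo hinv (Ici 0) (Ici 0))
    (hinvOn : RightInvOn hinv h (Ici 0)) (hf : ∀ y, fstar ≤ f y) (hg : HasSubgradientAt f g x)
    (hx : fstar < f x) :
    HasSubgradientAt (fun y => hinv (f y - fstar)) ((h' (hinv (f x - fstar)))⁻¹ • g) x := by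
  have hgap : ∀ y, f y - fstar ∈ Ici 0 := fun y => sub_nonneg.2 (hf y)
  have hcomp : (fun y => h (hinv (f y - fstar))) = fun y => f y - fstar :=
    funext fun y => hinvOn (hgap y)
  have hpos_at : 0 < hinv (f x - fstar) := by
    refine (hinvMaps (hgap x)).lt_of_ne fun hzero => ?_
    have := hinvOn (hgap x)
    rw [← hzero, h0] at this
    linarith
  exact (hcomp ▸ hg.sub_const fstar).of_comp_concaveOn hconc (fun y => hinvMaps (hgap y))
    (hderiv _ hpos_at) (hpos _ hpos_at)

lemma hasSubgradientAt_inv_comp_sub_of_le (hmono : StrictMonoOn h (Ici 0))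
    (hinvMaps : MapsTo hinv (Ici 0) (Ici 0)) (hinvOn : RightInvOn hinv h (Ici 0))
    (hf : ∀ y, fstar ≤ f y) (hx : f x ≤ fstar) :
    HasSubgradientAt (fun y => hinv (f y - fstar)) 0 x := by
  have hgap : ∀ y, f y - fstar ∈ Ici 0 := fun y => sub_nonneg.2 (hf y)
  refine hasSubgradientAt_zero_of_forall_le fun y =>
    (hmono.rightInvOn_le_iff hinvMaps hinvOn (hgap x) (hinvMaps (hgap y))).2 ?_
  rw [hinvOn (hgap y)]
  linarith [hf y]

lemma hasSubgradientAt_inv_comp_sub {h' : ℝ → ℝ} (hmono : StrictMonoOn h (Ici 0))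
    (hconc : ConcaveOn ℝ (Ici 0) h) (h0 : h 0 = 0) (hderiv : ∀ t > (0 : ℝ), HasDerivAt h (h' t) t)
    (hpos : ∀ t > (0 : ℝ), 0 < h' t) (hinvMaps : MapsTo hinv (Ici 0) (Ici 0))
    (hinvOn : RightInvOn hinv h (Ici 0)) (hf : ∀ y, fstar ≤ f y) (hg : HasSubgradientAt f g x) :
    HasSubgradientAt (fun y => hinv (f y - fstar))
      (if fstar < f x then (h' (hinv (f x - fstar)))⁻¹ • g else 0) x := by
  split_ifs with hx
  · exact hasSubgradientAt_inv_comp_sub_of_lt hconc h0 hderiv hpos hinvMaps hinvOn hf hg hx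
  · exact hasSubgradientAt_inv_comp_sub_of_le hmono hinvMaps hinvOn hf (not_lt.1 hx)

end GrowthTransform

theorem heavy_ball_rg_plus_distance_contraction_general
    {E : Type*} [NormedAddCommGroup E] [InnerProductSpace ℝ E]
    (h hinv h' : ℝ → ℝ)
    (hbij : Set.BijOn h (Set.Ici 0) (Set.Ici 0))
    (hmono : StrictMonoOn h (Set.Ici 0))
    (hconc : ConcaveOn ℝ (Set.Ici 0) h)
    (h0 : h 0 = 0)
    (hderiv : ∀ t > (0 : ℝ), HasDerivAt h (h' t) t)
    (hpos : ∀ t > (0 : ℝ), 0 < h' t)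
    (hinvOn : Set.InvOn hinv h (Set.Ici 0) (Set.Ici 0))
    (κ : ℝ) (hκ : 1 ≤ κ)
    (f : E → ℝ)
    (Xstar : Set E) (hXstar : Xstar = {z | ∀ y, f z ≤ f y}) (hne : Xstar.Nonempty)
    (fstar : ℝ) (hfstar : ∀ z ∈ Xstar, f z = fstar)
    (hRG : ∀ z, f z - fstar ≤ h (Metric.infDist z Xstar ^ 2))
    (hLG : ∀ z, f z - fstar ≥ h (Metric.infDist z Xstar ^ 2 / κ))
    (x g : ℕ → E) (γ : ℕ → ℝ)
    (hsub : ∀ k, ∀ y, f y ≥ f (x k) + ⟪g k, y - x k⟫)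
    (hγ : ∀ k, γ k = if fstar < f (x k)
        then 1 / (2 * ((k : ℝ) + 2) * h' (hinv (f (x k) - fstar))) else 0)
    (hupd : ∀ k, 1 ≤ k →
      x k = x (k - 1) - γ (k - 1) • g (k - 1)
        + ((((k : ℝ) - 1) / ((k : ℝ) + 1)) • (x (k - 1) - x (k - 2)))) :
    ∀ n : ℕ,
      Metric.infDist (x n) Xstar ^ 2
        ≤ κ / ((n : ℝ) + 1) * Metric.infDist (x 0) Xstar ^ 2 := by
  obtain ⟨z, hz⟩ := hne
  have hzmin : ∀ y, f z ≤ f y := by simpa [hXstar] using hz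
  have hf : ∀ y, fstar ≤ f y := fun y => hfstar z hz ▸ hzmin y
  have hgap : ∀ y, f y - fstar ∈ Ici 0 := fun y => sub_nonneg.2 (hf y)
  have hinvMaps : MapsTo hinv (Ici 0) (Ici 0) := hinvOn.1.mapsTo hbij.surjOn
  set φ := fun y => hinv (f y - fstar)
  set G := fun k : ℕ => (2 * ((k : ℝ) + 2) * γ k) • g k
  have hG : ∀ k, HasSubgradientAt φ (G k) (x k) := fun k => by
    convert hasSubgradientAt_inv_comp_sub hmono hconc h0 hderiv hpos hinvMaps hinvOn.2 hf
      (hsub k) using 1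
    simp only [G, hγ k]
    split_ifs
    · congr 1
      field_simp
    · simp
  have hs : ∀ k, heavyBallAnchor x (k + 1) = heavyBallAnchor x k - (2 : ℝ)⁻¹ • G k := by
    intro k
    have hstep := hupd (k + 1) (Nat.le_add_left 1 k)
    push_cast at hstep
    simp only [add_sub_cancel_right] at hstep
    rw [heavyBallAnchor_succ (by convert hstep using 4; ring), smul_smul, smul_smul]
    ring_nf
  have hφ_le : ∀ y, φ y ≤ infDist y Xstar ^ 2 := fun y =>
    (hmono.rightInvOn_le_iff hinvMaps hinvOn.2 (hgap y) (sq_nonneg (infDist y Xstar))).2 (hRG y)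
  have hκ0 : 0 < κ := zero_lt_one.trans_le hκ
  have hφ_ge : ∀ y, infDist y Xstar ^ 2 / κ ≤ φ y := fun y =>
    (hmono.le_rightInvOn_iff hinvMaps hinvOn.2 (hgap y) (by rw [mem_Ici]; positivity)).2
      (hLG y)
  intro n
  have hdecay := heavyBall_succ_mul_le_infDist_sq hG hs hφ_le ⟨z, hz⟩ n
  calc infDist (x n) Xstar ^ 2 ≤ κ * φ (x n) := (div_le_iff₀' hκ0).1 (hφ_ge (x n))
    _ ≤ κ / ((n : ℝ) + 1) * infDist (x 0) Xstar ^ 2 := by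
      rw [div_mul_eq_mul_div, le_div_iff₀ (by positivity), mul_assoc]
      gcongr
      linarith

theorem heavy_ball_rg_plus_distance_contraction
    {E : Type*} [NormedAddCommGroup E] [InnerProductSpace ℝ E] [FiniteDimensional ℝ E]
    (h hinv h' : ℝ → ℝ)
    (hbij : Set.BijOn h (Set.Ici 0) (Set.Ici 0))
    (hmono : StrictMonoOn h (Set.Ici 0))
    (hconc : ConcaveOn ℝ (Set.Ici 0) h)
    (h0 : h 0 = 0)
    (hderiv : ∀ t > (0 : ℝ), HasDerivAt h (h' t) t)
    (hpos : ∀ t > (0 : ℝ), 0 < h' t)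
    (hinvOn : Set.InvOn hinv h (Set.Ici 0) (Set.Ici 0))
    (κ : ℝ) (hκ : 1 ≤ κ)
    (f : E → ℝ) (hconv : ConvexOn ℝ Set.univ f)
    (Xstar : Set E) (hXstar : Xstar = {z | ∀ y, f z ≤ f y}) (hne : Xstar.Nonempty)
    (fstar : ℝ) (hfstar : ∀ z ∈ Xstar, f z = fstar)
    (hRG : ∀ z, f z - fstar ≤ h (Metric.infDist z Xstar ^ 2))
    (hLG : ∀ z, f z - fstar ≥ h (Metric.infDist z Xstar ^ 2 / κ))
    (x g : ℕ → E) (γ : ℕ → ℝ)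
    (hsub : ∀ k, ∀ y, f y ≥ f (x k) + ⟪g k, y - x k⟫)
    (hzero : ∀ k, f (x k) = fstar → g k = 0)
    (hγ : ∀ k, γ k = if fstar < f (x k)
        then 1 / (2 * ((k : ℝ) + 2) * h' (hinv (f (x k) - fstar))) else 0)
    (hupd : ∀ k, 1 ≤ k →
      x k = x (k - 1) - γ (k - 1) • g (k - 1)
        + ((((k : ℝ) - 1) / ((k : ℝ) + 1)) • (x (k - 1) - x (k - 2)))) :
    ∀ n : ℕ,
      Metric.infDist (x n) Xstar ^ 2
        ≤ κ / ((n : ℝ) + 1) * Metric.infDist (x 0) Xstar ^ 2 :=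
  heavy_ball_rg_plus_distance_contraction_general h hinv h' hbij hmono hconc h0 hderiv hpos hinvOn κ
    hκ f Xstar hXstar hne fstar hfstar hRG hLG x g γ hsub hγ hupd
end
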